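/- arXiv:1306.3334 — 8 statements merged into one kernel-verified Lean document; each statement's English description precedes it below -/
import Mathlib

section
/- For every real a > 1/2 there exists a constant C₀ = C₀(a) with the following property: if α : ℕ → ℕ → ℝ is a symmetric nonnegative coagulation kernel satisfying α(m,n) ≥ (mn)^a for all m,n ≥ 1, and f is a solution of the Smoluchowski coagulation equation for α whose mass M(t) = ∑_{n≥1} n·f_n(t) is finite for every t ≥ 0 and nonincreasing in t, then ∫₀^∞ M(t)² dt ≤ C₀·M(0). In particular, if M(0) > 0 then M(t) < M(0) for every t > C₀/M(0), i.e. gelation occurs before time C₀/M(0). -/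
/-- The mass of the density profile `f` at time `t`: `∑_{n ≥ 1} n · f_n(t)`. -/
noncomputable def smolMass (f : ℕ → ℝ → ℝ) (t : ℝ) : ℝ :=
  ∑' n : ℕ, ((n : ℝ) + 1) * f (n + 1) t

/-- `f` is a solution of the discrete homogeneous Smoluchowski coagulation equation
with kernel `α` (only indices `n ≥ 1` matter): the densities are nonnegative, the
loss-term series and the mass series converge, and each `f_n` is differentiable on
`[0,∞)` with the prescribed derivative. -/
structure IsSmoluchowskiSolution (α : ℕ → ℕ → ℝ) (f : ℕ → ℝ → ℝ) : Prop where
  nonneg : ∀ n : ℕ, 1 ≤ n → ∀ t : ℝ, 0 ≤ t → 0 ≤ f n t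
  loss_summable : ∀ n : ℕ, 1 ≤ n → ∀ t : ℝ, 0 ≤ t →
    Summable (fun m : ℕ => α n (m + 1) * f n t * f (m + 1) t)
  mass_summable : ∀ t : ℝ, 0 ≤ t →
    Summable (fun n : ℕ => ((n : ℝ) + 1) * f (n + 1) t)
  hasDeriv : ∀ n : ℕ, 1 ≤ n → ∀ t : ℝ, 0 ≤ t →
    HasDerivWithinAt (fun u => f n u)
      ((1 / 2) * ∑ m ∈ Finset.Ico 1 n, α m (n - m) * f m t * f (n - m) t
        - ∑' m : ℕ, α n (m + 1) * f n t * f (m + 1) t)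
      (Set.Ici (0 : ℝ)) t

/-!
If every two sizes of a finite set `S ⊆ [1, N]` sum to more than `N`, then each coagulation
between clusters with sizes in `S` removes mass from the range `[1, N]`. By the symmetry of
the kernel the truncated mass `∑_{n ≤ N} n f_n` therefore decreases at rate at least
`∑_{i, j ∈ S} i α(i,j) f_i f_j ≥ (min S) (∑_{i ∈ S} i^a f_i)^2`, and integrating in time
gives `(min S) ∫_0^∞ (∑_{i ∈ S} i^a f_i)^2 dt ≤ M(0)`.

For the dyadic blocks `S_k = [2^k, 2^(k+1))` and `Q_k = ∑_{i ∈ S_k} i^a f_i` this reads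
`∫ Q_k^2 ≤ 2^(-k) M(0)`. When `a ≤ 1` we have `i ≤ 2^((k+1)(1-a)) i^a` on `S_k`, so
`M ≤ ∑_k 2^((k+1)(1-a)) Q_k`, and Cauchy–Schwarz with the weights `ρ^k`, `ρ = 2^(1/2-a) < 1`,
yields `∫ M^2 ≤ 2^(2-2a) (1-ρ)^(-2) M(0)`. A nonincreasing mass that stayed equal to `M(0)`
up to time `t` would give `M(0)^2 t ≤ C₀ M(0)`.
-/

open Finset MeasureTheory
open scoped ENNReal

theorem ENNReal.two_mul_le_add_sq (x y : ℝ≥0∞) : 2 * x * y ≤ x ^ 2 + y ^ 2 := by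
  induction x using ENNReal.recTopCoe with
  | top => rcases eq_or_ne y 0 with rfl | hy <;> simp [*]
  | coe x =>
    induction y using ENNReal.recTopCoe with
    | top => simp
    | coe y => exact_mod_cast _root_.two_mul_le_add_sq x y

theorem ENNReal.sq_tsum_le_tsum_mul_tsum_sq_div {ι : Type*} (b v : ι → ℝ≥0∞)
    (hb0 : ∀ i, b i ≠ 0) (hb : ∀ i, b i ≠ ∞) :
    (∑' i, v i) ^ 2 ≤ (∑' i, b i) * ∑' i, v i ^ 2 / b i := by
  set x : ι → ℝ≥0∞ := fun i => v i / b i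
  have hv : ∀ i, v i = b i * x i := fun i => (ENNReal.mul_div_cancel (hb0 i) (hb i)).symm
  have hv2 : ∀ i, v i ^ 2 / b i = b i * x i ^ 2 := fun i => by
    rw [hv i, mul_pow, sq (b i), mul_assoc, mul_comm (b i),
      ENNReal.mul_div_cancel_right (hb0 i) (hb i)]
  simp_rw [hv2, hv]
  refine (ENNReal.mul_le_mul_iff_right two_ne_zero ENNReal.ofNat_ne_top).1 ?_
  have hswap : ∑' i, ∑' j, b i * b j * x i ^ 2 = ∑' i, ∑' j, b i * b j * x j ^ 2 := by
    rw [ENNReal.tsum_comm]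
    exact tsum_congr fun i => tsum_congr fun j => by ring
  calc 2 * (∑' i, b i * x i) ^ 2 = ∑' i, ∑' j, b i * b j * (2 * x i * x j) := by
        rw [sq, ← ENNReal.tsum_mul_right, ← ENNReal.tsum_mul_left]
        refine tsum_congr fun i => ?_
        rw [← ENNReal.tsum_mul_left, ← ENNReal.tsum_mul_left]
        exact tsum_congr fun j => by ring
    _ ≤ ∑' i, ∑' j, b i * b j * (x i ^ 2 + x j ^ 2) := by
        gcongr with i j
        exact ENNReal.two_mul_le_add_sq _ _
    _ = 2 * ((∑' i, b i) * ∑' i, b i * x i ^ 2) := by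
        simp_rw [mul_add, ENNReal.tsum_add, hswap, ← two_mul, ← ENNReal.tsum_mul_right]
        congr 1
        refine tsum_congr fun i => ?_
        rw [← ENNReal.tsum_mul_left]
        exact tsum_congr fun j => by ring

theorem setLIntegral_Ioi_le_of_forall_Ioc {g : ℝ → ℝ≥0∞} {a : ℝ} {C : ℝ≥0∞}
    (h : ∀ n : ℕ, ∫⁻ t in Set.Ioc a n, g t ≤ C) : ∫⁻ t in Set.Ioi a, g t ≤ C := by
  have hunion : ⋃ n : ℕ, Set.Ioc a n = Set.Ioi a :=
    Set.iUnion_Ioc_eq_Ioi_self_iff.2 fun x _ => exists_nat_ge x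
  rw [← hunion, setLIntegral_iUnion_of_directed _
    (Monotone.directed_le fun m n hmn => Set.Ioc_subset_Ioc_right (by exact_mod_cast hmn))]
  exact iSup_le h

namespace Smoluchowski

section Coagulation

variable {F : ℕ → ℕ → ℝ}

theorem mul_half_sum_Ico_eq_sum_mul (hF : ∀ i j, 1 ≤ i → 1 ≤ j → F i j = F j i) (n : ℕ) :
    (n : ℝ) * (1 / 2 * ∑ m ∈ Ico 1 n, F m (n - m))
      = ∑ m ∈ Ico 1 n, (m : ℝ) * F m (n - m) := by
  have reflect : ∑ m ∈ Ico 1 n, ((n - m : ℕ) : ℝ) * F m (n - m)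
      = ∑ m ∈ Ico 1 n, (m : ℝ) * F m (n - m) := by
    refine sum_nbij' (n - ·) (n - ·) ?_ ?_ ?_ ?_ ?_ <;> intro m hm <;>
      simp only [mem_Ico] at hm ⊢
    any_goals omega
    rw [hF m (n - m) hm.1 (by omega), Nat.sub_sub_self hm.2.le]
  have split : (n : ℝ) * ∑ m ∈ Ico 1 n, F m (n - m)
      = ∑ m ∈ Ico 1 n, ((n - m : ℕ) : ℝ) * F m (n - m)
        + ∑ m ∈ Ico 1 n, (m : ℝ) * F m (n - m) := by
    rw [mul_sum, ← sum_add_distrib]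
    refine sum_congr rfl fun m hm => ?_
    rw [Nat.cast_sub (mem_Ico.1 hm).2.le]
    ring
  linarith

theorem sum_Icc_sum_Ico_sub_eq (G : ℕ → ℕ → ℝ) (N : ℕ) :
    ∑ n ∈ Icc 1 N, ∑ m ∈ Ico 1 n, G m (n - m)
      = ∑ i ∈ Icc 1 N, ∑ j ∈ Icc 1 (N - i), G i j := by
  rw [sum_sigma', sum_sigma']
  refine sum_nbij' (fun p => ⟨p.2, p.1 - p.2⟩) (fun p => ⟨p.1 + p.2, p.1⟩)
    ?_ ?_ ?_ ?_ ?_ <;> rintro ⟨n, m⟩ hp <;>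
    simp only [mem_sigma, mem_Icc, mem_Ico, Sigma.mk.injEq, heq_eq_eq, and_true] at hp ⊢
  any_goals omega
  simp

theorem sum_le_tsum_succ (h : ℕ → ℝ) (hnn : ∀ j, 1 ≤ j → 0 ≤ h j)
    (hs : Summable fun m => h (m + 1)) (J : Finset ℕ) (hJ : ∀ j ∈ J, 1 ≤ j) :
    ∑ j ∈ J, h j ≤ ∑' m, h (m + 1) := by
  have hJ' : J = (J.image (· - 1)).map (addRightEmbedding 1) := by
    ext j
    simp only [mem_map, mem_image, addRightEmbedding_apply]
    constructor
    · exact fun hj => ⟨j - 1, ⟨j, hj, rfl⟩, Nat.sub_add_cancel (hJ j hj)⟩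
    · rintro ⟨_, ⟨i, hi, rfl⟩, rfl⟩
      rwa [Nat.sub_add_cancel (hJ i hi)]
  rw [hJ', sum_map]
  exact hs.sum_le_tsum _ fun m _ => hnn (m + 1) le_add_self

theorem sum_mul_rate_le_neg_sum_mul_sum (hsymm : ∀ i j, 1 ≤ i → 1 ≤ j → F i j = F j i)
    (hnn : ∀ i j, 1 ≤ i → 1 ≤ j → 0 ≤ F i j)
    (hsum : ∀ n, 1 ≤ n → Summable fun m => F n (m + 1)) {N : ℕ} {S : Finset ℕ}
    (hS : ∀ i ∈ S, 1 ≤ i ∧ i ≤ N) (hSS : ∀ i ∈ S, ∀ j ∈ S, N < i + j) :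
    ∑ n ∈ Icc 1 N, (n : ℝ) * (1 / 2 * ∑ m ∈ Ico 1 n, F m (n - m) - ∑' m, F n (m + 1))
      ≤ -∑ n ∈ S, (n : ℝ) * ∑ j ∈ S, F n j := by
  have gain : ∑ n ∈ Icc 1 N, (n : ℝ) * (1 / 2 * ∑ m ∈ Ico 1 n, F m (n - m))
      = ∑ n ∈ Icc 1 N, (n : ℝ) * ∑ j ∈ Icc 1 (N - n), F n j := by
    simp_rw [mul_half_sum_Ico_eq_sum_mul hsymm, mul_sum]
    exact sum_Icc_sum_Ico_sub_eq (fun i j => (i : ℝ) * F i j) N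
  have loss : ∀ n ∈ Icc 1 N, ∑ j ∈ Icc 1 (N - n), F n j
      + (if n ∈ S then ∑ j ∈ S, F n j else 0) ≤ ∑' m, F n (m + 1) := by
    intro n hn
    have hn1 := (mem_Icc.1 hn).1
    have hle := sum_le_tsum_succ (F n) (hnn n · hn1) (hsum n hn1)
    split_ifs with hnS
    · rw [← sum_union (disjoint_left.2 fun j hj hjS => by
        have := hSS n hnS j hjS; rw [mem_Icc] at hj; omega)]
      refine hle _ fun j hj => ?_
      rcases mem_union.1 hj with hj | hj
      exacts [(mem_Icc.1 hj).1, (hS j hj).1]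
    · simpa using hle _ fun j hj => (mem_Icc.1 hj).1
  have hSsub : S ⊆ Icc 1 N := fun i hi => mem_Icc.2 (hS i hi)
  calc ∑ n ∈ Icc 1 N, (n : ℝ) * (1 / 2 * ∑ m ∈ Ico 1 n, F m (n - m) - ∑' m, F n (m + 1))
      = ∑ n ∈ Icc 1 N, (n : ℝ) * ∑ j ∈ Icc 1 (N - n), F n j
          - ∑ n ∈ Icc 1 N, (n : ℝ) * ∑' m, F n (m + 1) := by
        simp_rw [mul_sub, sum_sub_distrib, gain]
    _ ≤ -∑ n ∈ Icc 1 N, (n : ℝ) * (if n ∈ S then ∑ j ∈ S, F n j else 0) := by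
        have := sum_le_sum fun n hn =>
          mul_le_mul_of_nonneg_left (loss n hn) (Nat.cast_nonneg (α := ℝ) n)
        simp only [mul_add, sum_add_distrib] at this
        linarith
    _ = -∑ n ∈ S, (n : ℝ) * ∑ j ∈ S, F n j := by
        simp_rw [mul_ite, mul_zero]
        rw [sum_ite_mem, inter_eq_right.2 hSsub]

end Coagulation

theorem mul_sq_sum_rpow_mul_le {α : ℕ → ℕ → ℝ} {x : ℕ → ℝ} {S : Finset ℕ} {a c : ℝ}
    (hlow : ∀ m n : ℕ, 1 ≤ m → 1 ≤ n → ((m : ℝ) * (n : ℝ)) ^ a ≤ α m n)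
    (hS : ∀ i ∈ S, 1 ≤ i) (hc : ∀ i ∈ S, c ≤ i) (hx : ∀ i ∈ S, 0 ≤ x i) :
    c * (∑ i ∈ S, (i : ℝ) ^ a * x i) ^ 2
      ≤ ∑ n ∈ S, (n : ℝ) * ∑ j ∈ S, α n j * x n * x j := by
  rw [sq, sum_mul_sum, mul_sum]
  refine sum_le_sum fun n hn => ?_
  rw [mul_sum, mul_sum]
  refine sum_le_sum fun j hj => ?_
  have hxx : 0 ≤ x n * x j := mul_nonneg (hx n hn) (hx j hj)
  calc c * ((n : ℝ) ^ a * x n * ((j : ℝ) ^ a * x j))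
        = c * ((n : ℝ) * j) ^ a * (x n * x j) := by
        rw [Real.mul_rpow n.cast_nonneg j.cast_nonneg]
        ring
    _ ≤ n * α n j * (x n * x j) := by
        gcongr
        exacts [hc n hn, hlow n j (hS n hn) (hS j hj)]
    _ = n * (α n j * x n * x j) := by ring

def dyadicBlock (k : ℕ) : Finset ℕ := Ico (2 ^ k) (2 ^ (k + 1))

theorem one_le_of_mem_dyadicBlock {k i : ℕ} (hi : i ∈ dyadicBlock k) : 1 ≤ i :=
  Nat.one_le_two_pow.trans (mem_Ico.1 hi).1

theorem sum_range_sum_dyadicBlock {M : Type*} [AddCommMonoid M] (g : ℕ → M) (K : ℕ) :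
    ∑ k ∈ range K, ∑ i ∈ dyadicBlock k, g i = ∑ i ∈ Ico 1 (2 ^ K), g i := by
  induction K with
  | zero => simp
  | succ K ih =>
    rw [sum_range_succ, ih, dyadicBlock,
      sum_Ico_consecutive _ Nat.one_le_two_pow (Nat.pow_le_pow_right two_pos K.le_succ)]

noncomputable def blockMoment (f : ℕ → ℝ → ℝ) (a : ℝ) (k : ℕ) (t : ℝ) : ℝ :=
  ∑ i ∈ dyadicBlock k, (i : ℝ) ^ a * f i t

theorem sum_mul_le_rpow_mul_blockMoment {f : ℕ → ℝ → ℝ} {a t : ℝ} (ha : a ≤ 1) (k : ℕ)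
    (hf : ∀ i ∈ dyadicBlock k, 0 ≤ f i t) :
    ∑ i ∈ dyadicBlock k, (i : ℝ) * f i t
      ≤ ((2 : ℝ) ^ (k + 1)) ^ (1 - a) * blockMoment f a k t := by
  rw [blockMoment, mul_sum]
  refine sum_le_sum fun i hi => ?_
  have hi0 : (0 : ℝ) < i := Nat.cast_pos.2 (one_le_of_mem_dyadicBlock hi)
  have hlt : (i : ℝ) ≤ 2 ^ (k + 1) := by exact_mod_cast (mem_Ico.1 hi).2.le
  calc (i : ℝ) * f i t = (i : ℝ) ^ (1 - a) * ((i : ℝ) ^ a * f i t) := by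
        rw [← mul_assoc, ← Real.rpow_add hi0, sub_add_cancel, Real.rpow_one]
    _ ≤ ((2 : ℝ) ^ (k + 1)) ^ (1 - a) * ((i : ℝ) ^ a * f i t) := by
        gcongr
        exact mul_nonneg (by positivity) (hf i hi)

theorem rpow_two_pow_succ_sq_div (a : ℝ) (k : ℕ) :
    (((2 : ℝ) ^ (k + 1)) ^ (1 - a)) ^ 2 / (2 ^ k * ((2 : ℝ) ^ (1 / 2 - a)) ^ k)
      = (2 : ℝ) ^ (2 - 2 * a) * ((2 : ℝ) ^ (1 / 2 - a)) ^ k := by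
  simp only [← Real.rpow_natCast, ← Real.rpow_mul zero_le_two, ← Real.rpow_add two_pos,
    ← Real.rpow_sub two_pos]
  congr 1
  push_cast
  ring

theorem lt_of_lintegral_sq_le {M : ℝ → ℝ} {C : ℝ} (hC : 0 ≤ C)
    (hanti : ∀ s t : ℝ, 0 ≤ s → s ≤ t → M t ≤ M s)
    (hint : ∫⁻ t in Set.Ioi 0, ENNReal.ofReal (M t ^ 2) ≤ ENNReal.ofReal (C * M 0))
    (hM₀ : 0 < M 0) {t : ℝ} (ht : C / M 0 < t) : M t < M 0 := by
  by_contra! hle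
  have ht0 : 0 < t := (div_nonneg hC hM₀.le).trans_lt ht
  have hconst : ∀ s ∈ Set.Ioc 0 t, M s = M 0 := fun s hs =>
    le_antisymm (hanti 0 s le_rfl hs.1.le) (hle.trans (hanti s t hs.1.le hs.2))
  have hbound : ENNReal.ofReal (M 0 ^ 2 * t) ≤ ENNReal.ofReal (C * M 0) :=
    calc ENNReal.ofReal (M 0 ^ 2 * t) = ∫⁻ s in Set.Ioc 0 t, ENNReal.ofReal (M s ^ 2) := by
          rw [setLIntegral_congr_fun measurableSet_Ioc fun s hs => by rw [hconst s hs],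
            setLIntegral_const, Real.volume_Ioc, sub_zero, ENNReal.ofReal_mul (sq_nonneg _)]
      _ ≤ ∫⁻ s in Set.Ioi 0, ENNReal.ofReal (M s ^ 2) :=
          lintegral_mono_set Set.Ioc_subset_Ioi_self
      _ ≤ _ := hint
  have hreal := (ENNReal.ofReal_le_ofReal_iff (by positivity)).1 hbound
  have hC_lt := (div_lt_iff₀ hM₀).1 ht
  nlinarith

end Smoluchowski

namespace IsSmoluchowskiSolution

open Smoluchowski

variable {α : ℕ → ℕ → ℝ} {f : ℕ → ℝ → ℝ} {a : ℝ}

theorem continuousOn (hsol : IsSmoluchowskiSolution α f) {n : ℕ} (hn : 1 ≤ n) :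
    ContinuousOn (f n) (Set.Ici 0) :=
  fun t ht => (hsol.hasDeriv n hn t ht).continuousWithinAt

theorem continuousOn_sum_mul (hsol : IsSmoluchowskiSolution α f) (w : ℕ → ℝ) {S : Finset ℕ}
    (hS : ∀ i ∈ S, 1 ≤ i) : ContinuousOn (fun t => ∑ i ∈ S, w i * f i t) (Set.Ici 0) :=
  continuousOn_finsetSum _ fun i hi => continuousOn_const.mul (hsol.continuousOn (hS i hi))

theorem continuousOn_blockMoment (hsol : IsSmoluchowskiSolution α f) (k : ℕ) :
    ContinuousOn (blockMoment f a k) (Set.Ici 0) :=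
  hsol.continuousOn_sum_mul (· ^ a) fun _ => one_le_of_mem_dyadicBlock

theorem blockMoment_nonneg (hsol : IsSmoluchowskiSolution α f) (k : ℕ) {t : ℝ} (ht : 0 ≤ t) :
    0 ≤ blockMoment f a k t :=
  sum_nonneg fun i hi =>
    mul_nonneg (by positivity) (hsol.nonneg i (one_le_of_mem_dyadicBlock hi) t ht)

theorem smolMass_nonneg (hsol : IsSmoluchowskiSolution α f) {t : ℝ} (ht : 0 ≤ t) :
    0 ≤ smolMass f t :=
  tsum_nonneg fun n => mul_nonneg n.cast_add_one_pos.le (hsol.nonneg (n + 1) le_add_self t ht)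

theorem sum_mul_le_smolMass (hsol : IsSmoluchowskiSolution α f) {t : ℝ} (ht : 0 ≤ t)
    (J : Finset ℕ) (hJ : ∀ j ∈ J, 1 ≤ j) :
    ∑ j ∈ J, (j : ℝ) * f j t ≤ smolMass f t := by
  have := sum_le_tsum_succ (fun j => (j : ℝ) * f j t)
    (fun j hj => mul_nonneg j.cast_nonneg (hsol.nonneg j hj t ht))
    (by simpa using hsol.mass_summable t ht) J hJ
  simpa [smolMass] using this

theorem hasDerivWithinAt_sum_mul (hsol : IsSmoluchowskiSolution α f) (N : ℕ) {t : ℝ}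
    (ht : 0 ≤ t) :
    HasDerivWithinAt (fun u => ∑ n ∈ Icc 1 N, (n : ℝ) * f n u)
      (∑ n ∈ Icc 1 N, (n : ℝ) * (1 / 2 * ∑ m ∈ Ico 1 n, α m (n - m) * f m t * f (n - m) t
        - ∑' m, α n (m + 1) * f n t * f (m + 1) t)) (Set.Ici 0) t :=
  HasDerivWithinAt.fun_sum fun n hn => (hsol.hasDeriv n (mem_Icc.1 hn).1 t ht).const_mul _

theorem mul_integral_sq_le_smolMass (hsol : IsSmoluchowskiSolution α f)
    (hsym : ∀ m n : ℕ, 1 ≤ m → 1 ≤ n → α m n = α n m)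
    (hlow : ∀ m n : ℕ, 1 ≤ m → 1 ≤ n → ((m : ℝ) * (n : ℝ)) ^ a ≤ α m n)
    {N : ℕ} {S : Finset ℕ} (hS : ∀ i ∈ S, 1 ≤ i ∧ i ≤ N) (hSS : ∀ i ∈ S, ∀ j ∈ S, N < i + j)
    {c : ℝ} (hc : ∀ i ∈ S, c ≤ i) {T : ℝ} (hT : 0 ≤ T) :
    c * ∫ t in 0..T, (∑ i ∈ S, (i : ℝ) ^ a * f i t) ^ 2 ≤ smolMass f 0 := by
  have hQ := (hsol.continuousOn_sum_mul (· ^ a) fun i hi => (hS i hi).1).fun_pow 2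
  have hmass := hsol.continuousOn_sum_mul (↑) (S := Icc 1 N) fun n hn => (mem_Icc.1 hn).1
  have hrate : ∀ t, 0 ≤ t → ∑ n ∈ Icc 1 N, (n : ℝ) *
      (1 / 2 * ∑ m ∈ Ico 1 n, α m (n - m) * f m t * f (n - m) t
        - ∑' m, α n (m + 1) * f n t * f (m + 1) t)
      ≤ -(c * (∑ i ∈ S, (i : ℝ) ^ a * f i t) ^ 2) := fun t ht =>
    (sum_mul_rate_le_neg_sum_mul_sum (F := fun i j => α i j * f i t * f j t)
      (fun i j hi hj => by rw [hsym i j hi hj]; ring)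
      (fun i j hi hj => mul_nonneg (mul_nonneg
        ((by positivity : (0 : ℝ) ≤ (i * j : ℝ) ^ a).trans (hlow i j hi hj))
        (hsol.nonneg i hi t ht)) (hsol.nonneg j hj t ht))
      (fun n hn => hsol.loss_summable n hn t ht) hS hSS).trans <|
    neg_le_neg <| mul_sq_sum_rpow_mul_le hlow (fun i hi => (hS i hi).1) hc
      fun i hi => hsol.nonneg i (hS i hi).1 t ht
  have hFTC := intervalIntegral.sub_le_integral_of_hasDeriv_right_of_le
    (φ := fun t => -(c * (∑ i ∈ S, (i : ℝ) ^ a * f i t) ^ 2)) hT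
    (hmass.mono Set.Icc_subset_Ici_self)
    (fun x hx => (hsol.hasDerivWithinAt_sum_mul N hx.1.le).mono (Set.Ioi_subset_Ici hx.1.le))
    ((hQ.mono Set.Icc_subset_Ici_self).integrableOn_Icc.const_mul c).neg
    fun x hx => hrate x hx.1.le
  rw [intervalIntegral.integral_neg, intervalIntegral.integral_const_mul] at hFTC
  have hT_nonneg : 0 ≤ ∑ n ∈ Icc 1 N, (n : ℝ) * f n T :=
    sum_nonneg fun n hn => mul_nonneg n.cast_nonneg (hsol.nonneg n (mem_Icc.1 hn).1 T hT)
  have h0 := hsol.sum_mul_le_smolMass le_rfl (Icc 1 N) fun n hn => (mem_Icc.1 hn).1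
  linarith

theorem lintegral_sq_le_ofReal_smolMass_div (hsol : IsSmoluchowskiSolution α f)
    (hsym : ∀ m n : ℕ, 1 ≤ m → 1 ≤ n → α m n = α n m)
    (hlow : ∀ m n : ℕ, 1 ≤ m → 1 ≤ n → ((m : ℝ) * (n : ℝ)) ^ a ≤ α m n)
    {N : ℕ} {S : Finset ℕ} (hS : ∀ i ∈ S, 1 ≤ i ∧ i ≤ N) (hSS : ∀ i ∈ S, ∀ j ∈ S, N < i + j)
    {c : ℝ} (hc0 : 0 < c) (hc : ∀ i ∈ S, c ≤ i) :
    ∫⁻ t in Set.Ioi 0, ENNReal.ofReal ((∑ i ∈ S, (i : ℝ) ^ a * f i t) ^ 2)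
      ≤ ENNReal.ofReal (smolMass f 0 / c) := by
  have hQ := (hsol.continuousOn_sum_mul (· ^ a) fun i hi => (hS i hi).1).fun_pow 2
  refine setLIntegral_Ioi_le_of_forall_Ioc fun T => ?_
  rw [← ofReal_integral_eq_lintegral_ofReal
    ((hQ.mono Set.Icc_subset_Ici_self).integrableOn_Icc.mono_set Set.Ioc_subset_Icc_self)
    (Filter.Eventually.of_forall fun _ => sq_nonneg _),
    ← intervalIntegral.integral_of_le T.cast_nonneg]
  refine ENNReal.ofReal_le_ofReal ((le_div_iff₀ hc0).2 ?_)
  rw [mul_comm]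
  exact hsol.mul_integral_sq_le_smolMass hsym hlow hS hSS hc T.cast_nonneg

theorem lintegral_blockMoment_sq_le (hsol : IsSmoluchowskiSolution α f)
    (hsym : ∀ m n : ℕ, 1 ≤ m → 1 ≤ n → α m n = α n m)
    (hlow : ∀ m n : ℕ, 1 ≤ m → 1 ≤ n → ((m : ℝ) * (n : ℝ)) ^ a ≤ α m n) (k : ℕ) :
    ∫⁻ t in Set.Ioi 0, ENNReal.ofReal (blockMoment f a k t ^ 2)
      ≤ ENNReal.ofReal (smolMass f 0 / 2 ^ k) := by
  have hpow : 2 ^ (k + 1) = 2 ^ k + 2 ^ k := by rw [pow_succ, mul_two]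
  have hk := Nat.one_le_two_pow (n := k)
  refine hsol.lintegral_sq_le_ofReal_smolMass_div hsym hlow (N := 2 ^ (k + 1) - 1)
    (fun i hi => ?_) (fun i hi j hj => ?_) (by positivity) fun i hi => ?_ <;>
    simp only [dyadicBlock, mem_Ico] at *
  · omega
  · omega
  · exact_mod_cast hi.1

theorem ofReal_smolMass_le_tsum (hsol : IsSmoluchowskiSolution α f) (ha : a ≤ 1) {t : ℝ}
    (ht : 0 ≤ t) :
    ENNReal.ofReal (smolMass f t)
      ≤ ∑' k, ENNReal.ofReal (((2 : ℝ) ^ (k + 1)) ^ (1 - a) * blockMoment f a k t) := by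
  have hterm : ∀ i : ℕ, 1 ≤ i → 0 ≤ (i : ℝ) * f i t := fun i hi =>
    mul_nonneg i.cast_nonneg (hsol.nonneg i hi t ht)
  rw [smolMass, ENNReal.ofReal_tsum_of_nonneg (fun n => by exact_mod_cast hterm (n + 1) le_add_self)
    (hsol.mass_summable t ht)]
  refine ENNReal.tsum_le_of_sum_range_le fun N => ?_
  calc ∑ n ∈ range N, ENNReal.ofReal (((n : ℝ) + 1) * f (n + 1) t)
      = ENNReal.ofReal (∑ i ∈ Ico 1 (N + 1), (i : ℝ) * f i t) := by
        rw [← ENNReal.ofReal_sum_of_nonneg fun n _ => by exact_mod_cast hterm (n + 1) le_add_self,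
          sum_Ico_eq_sum_range, Nat.add_sub_cancel]
        push_cast
        simp only [add_comm]
    _ ≤ ENNReal.ofReal (∑ i ∈ Ico (1 : ℕ) (2 ^ N), (i : ℝ) * f i t) :=
        ENNReal.ofReal_le_ofReal <| sum_le_sum_of_subset_of_nonneg
          (Ico_subset_Ico_right N.lt_two_pow_self) fun i hi _ => hterm i (mem_Ico.1 hi).1
    _ ≤ ENNReal.ofReal
          (∑ k ∈ range N, ((2 : ℝ) ^ (k + 1)) ^ (1 - a) * blockMoment f a k t) := by
        rw [← sum_range_sum_dyadicBlock]
        exact ENNReal.ofReal_le_ofReal <| sum_le_sum fun k _ =>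
          sum_mul_le_rpow_mul_blockMoment ha k fun i hi =>
            hsol.nonneg i (one_le_of_mem_dyadicBlock hi) t ht
    _ = ∑ k ∈ range N, ENNReal.ofReal (((2 : ℝ) ^ (k + 1)) ^ (1 - a) * blockMoment f a k t) :=
        ENNReal.ofReal_sum_of_nonneg fun k _ =>
          mul_nonneg (by positivity) (hsol.blockMoment_nonneg k ht)
    _ ≤ _ := ENNReal.sum_le_tsum _

theorem lintegral_blockMoment_sq_div_le (hsol : IsSmoluchowskiSolution α f)
    (hsym : ∀ m n : ℕ, 1 ≤ m → 1 ≤ n → α m n = α n m)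
    (hlow : ∀ m n : ℕ, 1 ≤ m → 1 ≤ n → ((m : ℝ) * (n : ℝ)) ^ a ≤ α m n) (k : ℕ) :
    ∫⁻ t in Set.Ioi 0,
        ENNReal.ofReal (((2 : ℝ) ^ (k + 1)) ^ (1 - a) * blockMoment f a k t) ^ 2
          / ENNReal.ofReal ((2 : ℝ) ^ (1 / 2 - a)) ^ k
      ≤ ENNReal.ofReal (2 ^ (2 - 2 * a) * smolMass f 0)
        * ENNReal.ofReal ((2 : ℝ) ^ (1 / 2 - a)) ^ k := by
  set ρ : ℝ := (2 : ℝ) ^ (1 / 2 - a)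
  set d : ℝ := ((2 : ℝ) ^ (k + 1)) ^ (1 - a)
  have hρ0 : 0 < ρ := by positivity
  have hd : 0 ≤ d := by positivity
  have hM₀ := hsol.smolMass_nonneg le_rfl
  calc ∫⁻ t in Set.Ioi 0, ENNReal.ofReal (d * blockMoment f a k t) ^ 2 / ENNReal.ofReal ρ ^ k
      = ∫⁻ t in Set.Ioi 0, ENNReal.ofReal (d ^ 2 / ρ ^ k)
          * ENNReal.ofReal (blockMoment f a k t ^ 2) := by
        refine setLIntegral_congr_fun measurableSet_Ioi fun t ht => ?_
        rw [← ENNReal.ofReal_pow (mul_nonneg hd (hsol.blockMoment_nonneg k (le_of_lt ht))),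
          ← ENNReal.ofReal_pow hρ0.le, ← ENNReal.ofReal_div_of_pos (pow_pos hρ0 k),
          ← ENNReal.ofReal_mul (by positivity)]
        congr 1
        ring
    _ ≤ ENNReal.ofReal (d ^ 2 / ρ ^ k) * ENNReal.ofReal (smolMass f 0 / 2 ^ k) := by
        rw [lintegral_const_mul' _ _ ENNReal.ofReal_ne_top]
        gcongr
        exact hsol.lintegral_blockMoment_sq_le hsym hlow k
    _ = ENNReal.ofReal (2 ^ (2 - 2 * a) * smolMass f 0) * ENNReal.ofReal ρ ^ k := by
        rw [← ENNReal.ofReal_mul (by positivity), ← ENNReal.ofReal_pow hρ0.le,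
          ← ENNReal.ofReal_mul (by positivity)]
        congr 1
        have h : d ^ 2 / (2 ^ k * ρ ^ k) = 2 ^ (2 - 2 * a) * ρ ^ k :=
          rpow_two_pow_succ_sq_div a k
        linear_combination smolMass f 0 * h

theorem lintegral_smolMass_sq_le (hsol : IsSmoluchowskiSolution α f)
    (hsym : ∀ m n : ℕ, 1 ≤ m → 1 ≤ n → α m n = α n m)
    (hlow : ∀ m n : ℕ, 1 ≤ m → 1 ≤ n → ((m : ℝ) * (n : ℝ)) ^ a ≤ α m n)
    (ha : 1 / 2 < a) (ha1 : a ≤ 1) :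
    ∫⁻ t in Set.Ioi 0, ENNReal.ofReal (smolMass f t ^ 2)
      ≤ ENNReal.ofReal
          ((2 : ℝ) ^ (2 - 2 * a) / (1 - (2 : ℝ) ^ (1 / 2 - a)) ^ 2 * smolMass f 0) := by
  set ρ : ℝ := (2 : ℝ) ^ (1 / 2 - a)
  have hρ0 : 0 < ρ := by positivity
  have hρ1 : ρ < 1 := Real.rpow_lt_one_of_one_lt_of_neg one_lt_two (by linarith)
  set r := ENNReal.ofReal ρ
  set u : ℕ → ℝ → ℝ≥0∞ := fun k t =>
    ENNReal.ofReal (((2 : ℝ) ^ (k + 1)) ^ (1 - a) * blockMoment f a k t) ^ 2 / r ^ k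
  have hM₀ := hsol.smolMass_nonneg le_rfl
  have hgeom : ∑' k, r ^ k = ENNReal.ofReal (1 - ρ)⁻¹ := by
    rw [ENNReal.tsum_geometric, ← ENNReal.ofReal_one, ← ENNReal.ofReal_sub _ hρ0.le,
      ENNReal.ofReal_inv_of_pos (by linarith)]
  have hpointwise : ∀ t, 0 ≤ t →
      ENNReal.ofReal (smolMass f t ^ 2) ≤ ENNReal.ofReal (1 - ρ)⁻¹ * ∑' k, u k t :=
    fun t ht => by
      rw [ENNReal.ofReal_pow (hsol.smolMass_nonneg ht), ← hgeom]
      exact (pow_le_pow_left₀ zero_le (hsol.ofReal_smolMass_le_tsum ha1 ht) 2).trans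
        (ENNReal.sq_tsum_le_tsum_mul_tsum_sq_div _ _
          (fun k => pow_ne_zero k (ENNReal.ofReal_pos.2 hρ0).ne')
          fun k => ENNReal.pow_ne_top ENNReal.ofReal_ne_top)
  have hmeas : ∀ k, AEMeasurable (u k) (volume.restrict (Set.Ioi 0)) := fun k =>
    ((((hsol.continuousOn_blockMoment k).mono Set.Ioi_subset_Ici_self).aemeasurable
      measurableSet_Ioi).const_mul _).ennreal_ofReal.pow_const 2 |>.div_const _
  calc ∫⁻ t in Set.Ioi 0, ENNReal.ofReal (smolMass f t ^ 2)
      ≤ ∫⁻ t in Set.Ioi 0, ENNReal.ofReal (1 - ρ)⁻¹ * ∑' k, u k t :=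
        setLIntegral_mono' measurableSet_Ioi fun t ht => hpointwise t (le_of_lt ht)
    _ = ENNReal.ofReal (1 - ρ)⁻¹ * ∑' k, ∫⁻ t in Set.Ioi 0, u k t := by
        rw [lintegral_const_mul' _ _ ENNReal.ofReal_ne_top, lintegral_tsum hmeas]
    _ ≤ ENNReal.ofReal (1 - ρ)⁻¹
          * ∑' k, ENNReal.ofReal (2 ^ (2 - 2 * a) * smolMass f 0) * r ^ k := by
        gcongr with k
        exact hsol.lintegral_blockMoment_sq_div_le hsym hlow k
    _ = ENNReal.ofReal (2 ^ (2 - 2 * a) / (1 - ρ) ^ 2 * smolMass f 0) := by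
        rw [ENNReal.tsum_mul_left, hgeom, ← ENNReal.ofReal_mul (by positivity),
          ← ENNReal.ofReal_mul (inv_pos.2 (sub_pos.2 hρ1)).le]
        congr 1
        field_simp

end IsSmoluchowskiSolution

/-- For every `a > 1/2` there is a constant `C₀ = C₀(a)` such that any mass-finite,
mass-nonincreasing solution of the Smoluchowski equation with a symmetric nonnegative
kernel `α(m,n) ≥ (mn)^a` satisfies `∫₀^∞ M(t)² dt ≤ C₀ · M(0)`; in particular, if
`M(0) > 0` then `M(t) < M(0)` for every `t > C₀ / M(0)`. -/
theorem gelation_before_time_C0_div_M0 :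
    ∀ a : ℝ, 1 / 2 < a → ∃ C₀ : ℝ, 0 < C₀ ∧
      ∀ (α : ℕ → ℕ → ℝ) (f : ℕ → ℝ → ℝ),
        (∀ m n : ℕ, 1 ≤ m → 1 ≤ n → α m n = α n m) →
        (∀ m n : ℕ, 1 ≤ m → 1 ≤ n → 0 ≤ α m n) →
        (∀ m n : ℕ, 1 ≤ m → 1 ≤ n → ((m : ℝ) * (n : ℝ)) ^ a ≤ α m n) →
        IsSmoluchowskiSolution α f →
        (∀ s t : ℝ, 0 ≤ s → s ≤ t → smolMass f t ≤ smolMass f s) →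
        (∫⁻ t in Set.Ioi (0 : ℝ), ENNReal.ofReal ((smolMass f t) ^ 2)
            ≤ ENNReal.ofReal (C₀ * smolMass f 0)) ∧
        (0 < smolMass f 0 → ∀ t : ℝ, C₀ / smolMass f 0 < t →
          smolMass f t < smolMass f 0) := by
  intro a ha
  -- the dyadic mass bound needs an exponent `≤ 1`, and the kernel bound holds for `min a 1`
  set b := min a 1
  have hb : 1 / 2 < b := lt_min ha (by norm_num)
  have hρ1 : (2 : ℝ) ^ (1 / 2 - b) < 1 :=
    Real.rpow_lt_one_of_one_lt_of_neg one_lt_two (by linarith)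
  have hC₀ : 0 < (2 : ℝ) ^ (2 - 2 * b) / (1 - (2 : ℝ) ^ (1 / 2 - b)) ^ 2 :=
    div_pos (by positivity) (pow_pos (sub_pos.2 hρ1) 2)
  refine ⟨_, hC₀, fun α f hsym _ hlow hsol hmono => ?_⟩
  have hlow_b : ∀ m n : ℕ, 1 ≤ m → 1 ≤ n → ((m : ℝ) * (n : ℝ)) ^ b ≤ α m n :=
    fun m n hm hn => (Real.rpow_le_rpow_of_exponent_le
      (one_le_mul_of_one_le_of_one_le (by exact_mod_cast hm) (by exact_mod_cast hn))
      (min_le_left a 1)).trans (hlow m n hm hn)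
  have hint := hsol.lintegral_smolMass_sq_le hsym hlow_b hb (min_le_right a 1)
  exact ⟨hint, fun hM₀ _ ht => Smoluchowski.lt_of_lintegral_sq_le hC₀.le hmono hint hM₀ ht⟩
end

section
/- Let q > 1, δ ∈ (0,1) and T > 0, and for each integer k ≥ 1 let M_k : [0,T] → [0,∞) be a function such that: M_1(t) = 1 for all t ∈ [0,T]; M_{k+1}(0) = 0 for every k ≥ 1; and each M_{k+1} is differentiable on [0,T] with M_{k+1}'(t) ≥ k^{q−1}(1−δ)·M_k(t) for all t ∈ [0,T]. Then for every k ≥ 1 and every t ∈ [0,T], M_{k+1}(t) ≥ (k!)^{q−2}·((1−δ)t)^k. -/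
/-! Induction on `k`: if `M_{k+1} ≥ c t^k`, the differential inequality gives
`M_{k+2}' ≥ (k+1)^{q-1}(1-δ) c t^k`, and since `M_{k+2}(0) = 0` comparison with the
antiderivative `(k+1)^{q-2}(1-δ) c t^{k+1}` (via monotonicity of the difference) gives the next
bound; the constants telescope to `((k+1)!)^{q-2}(1-δ)^{k+1}`. -/

open Set Nat

theorem le_of_hasDerivWithinAt_le_of_le {f g f' g' : ℝ → ℝ} {a b : ℝ}
    (hf : ∀ t ∈ Icc a b, HasDerivWithinAt f (f' t) (Icc a b) t)
    (hg : ∀ t ∈ Icc a b, HasDerivWithinAt g (g' t) (Icc a b) t)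
    (hderiv : ∀ t ∈ Ioo a b, g' t ≤ f' t) (ha : g a ≤ f a) :
    ∀ t ∈ Icc a b, g t ≤ f t := by
  have hdiff (t) (ht : t ∈ Icc a b) :
      HasDerivWithinAt (fun u => f u - g u) (f' t - g' t) (Icc a b) t :=
    (hf t ht).sub (hg t ht)
  have hmono : MonotoneOn (fun u => f u - g u) (Icc a b) := by
    refine monotoneOn_of_hasDerivWithinAt_nonneg (f' := fun t => f' t - g' t) (convex_Icc a b)
      (fun t ht => (hdiff t ht).continuousWithinAt)
      (fun t ht => (hdiff t (interior_subset ht)).mono interior_subset)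
      (fun t ht => sub_nonneg.mpr (hderiv t (by rwa [interior_Icc] at ht)))
  intro t ht
  have := hmono (left_mem_Icc.mpr (ht.1.trans ht.2)) ht ht.1
  simp only at this
  linarith

theorem mul_pow_succ_le_of_hasDerivWithinAt {f f' : ℝ → ℝ} {T c : ℝ} {n : ℕ} (h0 : f 0 = 0)
    (hf : ∀ t ∈ Icc 0 T, HasDerivWithinAt f (f' t) (Icc 0 T) t)
    (hderiv : ∀ t ∈ Ioo 0 T, c * (n + 1) * t ^ n ≤ f' t) :
    ∀ t ∈ Icc 0 T, c * t ^ (n + 1) ≤ f t := by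
  refine le_of_hasDerivWithinAt_le_of_le hf (fun t _ => ?_) (by simpa using hderiv) (by simp [h0])
  simpa [mul_assoc] using ((hasDerivAt_pow (n + 1) t).const_mul c).hasDerivWithinAt

theorem Nat.cast_factorial_succ_rpow_mul (n : ℕ) (p : ℝ) :
    ((n + 1)! : ℝ) ^ p * (n + 1) = ((n : ℝ) + 1) ^ (p + 1) * (n ! : ℝ) ^ p := by
  have hn : (0 : ℝ) < n + 1 := by positivity
  rw [Nat.factorial_succ, Nat.cast_mul, Nat.cast_succ, Real.mul_rpow hn.le (by positivity),
    Real.rpow_add_one hn.ne']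
  ring

theorem tail_mass_lower_bound_general
    (q δ T : ℝ) (hδ : δ ∈ Set.Ioo (0 : ℝ) 1)
    (M : ℕ → ℝ → ℝ)
    (hM1 : ∀ t ∈ Set.Icc (0 : ℝ) T, M 1 t = 1)
    (hinit : ∀ k : ℕ, 1 ≤ k → M (k + 1) 0 = 0)
    (hderiv : ∀ k : ℕ, 1 ≤ k → ∀ t ∈ Set.Icc (0 : ℝ) T,
      ∃ d : ℝ, HasDerivWithinAt (fun u => M (k + 1) u) d (Set.Icc (0 : ℝ) T) t ∧
        (k : ℝ) ^ (q - 1) * (1 - δ) * M k t ≤ d) :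
    ∀ k : ℕ, 1 ≤ k → ∀ t ∈ Set.Icc (0 : ℝ) T,
      ((Nat.factorial k : ℝ)) ^ (q - 2) * ((1 - δ) * t) ^ k ≤ M (k + 1) t := by
  have hδ' : 0 ≤ 1 - δ := by linarith [hδ.2]
  choose! d hd hdle using hderiv
  -- Starting the induction at `k = 0` makes `M 1 = 1` the base case.
  have tail_bound (k : ℕ) : ∀ t ∈ Icc 0 T, (k ! : ℝ) ^ (q - 2) * (1 - δ) ^ k * t ^ k ≤ M (k + 1) t := by
    induction k with
    | zero => intro t ht; simp [hM1 t ht]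
    | succ k ih =>
      refine mul_pow_succ_le_of_hasDerivWithinAt (hinit _ k.succ_pos) (hd _ k.succ_pos)
        fun t ht => ?_
      have ht' := Ioo_subset_Icc_self ht
      calc ((k + 1)! : ℝ) ^ (q - 2) * (1 - δ) ^ (k + 1) * (k + 1) * t ^ k
          = ((k : ℝ) + 1) ^ (q - 1) * (1 - δ) * ((k ! : ℝ) ^ (q - 2) * (1 - δ) ^ k * t ^ k) := by
            rw [mul_right_comm _ _ ((k : ℝ) + 1), Nat.cast_factorial_succ_rpow_mul]
            ring_nf
        _ ≤ ((k : ℝ) + 1) ^ (q - 1) * (1 - δ) * M (k + 1) t := by gcongr; exact ih t ht'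
        _ ≤ d (k + 1) t := by exact_mod_cast hdle _ k.succ_pos t ht'
  intro k _ t ht
  simpa [mul_pow, mul_assoc] using tail_bound k t ht

/-- Differential-inequality lower bound on tail masses: if `M_1 ≡ 1` on `[0,T]`,
`M_{k+1}(0) = 0`, and each `M_{k+1}` is differentiable on `[0,T]` with
`M_{k+1}'(t) ≥ k^{q-1}(1-δ) M_k(t)`, then
`M_{k+1}(t) ≥ (k!)^{q-2} ((1-δ)t)^k` for all `k ≥ 1` and `t ∈ [0,T]`. -/
theorem tail_mass_lower_bound
    (q δ T : ℝ) (hq : 1 < q) (hδ : δ ∈ Set.Ioo (0 : ℝ) 1) (hT : 0 < T)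
    (M : ℕ → ℝ → ℝ)
    (hnonneg : ∀ k : ℕ, 1 ≤ k → ∀ t ∈ Set.Icc (0 : ℝ) T, 0 ≤ M k t)
    (hM1 : ∀ t ∈ Set.Icc (0 : ℝ) T, M 1 t = 1)
    (hinit : ∀ k : ℕ, 1 ≤ k → M (k + 1) 0 = 0)
    (hderiv : ∀ k : ℕ, 1 ≤ k → ∀ t ∈ Set.Icc (0 : ℝ) T,
      ∃ d : ℝ, HasDerivWithinAt (fun u => M (k + 1) u) d (Set.Icc (0 : ℝ) T) t ∧
        (k : ℝ) ^ (q - 1) * (1 - δ) * M k t ≤ d) :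
    ∀ k : ℕ, 1 ≤ k → ∀ t ∈ Set.Icc (0 : ℝ) T,
      ((Nat.factorial k : ℝ)) ^ (q - 2) * ((1 - δ) * t) ^ k ≤ M (k + 1) t :=
  tail_mass_lower_bound_general q δ T hδ M hM1 hinit hderiv
end

section
/- Let q ≥ 1 be real, let k ≥ 1 be an integer, and let f : ℕ → [0,∞) satisfy ∑_{n≥1} n·f_n = 1 and ∑_{n≥1} n^{q+1}·f_n < ∞. Then (1/2)·∑_{m≥1} ∑_{n≥1} (m^q + n^q)·f_m·f_n·Δ_{k+1}(m,n) ≥ k^{q−1}·M_k·(1 − M_{k+1}), where M_r = ∑_{n≥r} n·f_n. -/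
/-! Only merges of a cluster of size `m ≥ k` with one of size `n ≤ k` are counted: such a merge
carries at least `n` units of mass across the level `k + 1`, at rate at least `m ^ q`, so
(symmetrising away the factor `1/2`) the flux dominates
`(∑_{m ≥ k} m ^ q f_m) * (∑_{n ≤ k} n f_n)`. The first factor is at least `k ^ (q - 1) M_k`
because `m ^ q ≥ k ^ (q - 1) m` for `m ≥ k`, and the second is `1 - M_{k+1}` by the unit mass.
The double series converges because its terms are bounded by `4 m ^ (q + 1) f_m n ^ (q + 1) f_n`. -/

/-- `Δ_K(m,n) = (m+n)·1[m+n ≥ K] − m·1[m ≥ K] − n·1[n ≥ K]`, the change of the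
test function `ψ(j) = j·1[j ≥ K]` when clusters of sizes `m` and `n` merge. -/
noncomputable def deltaMass (K m n : ℕ) : ℝ :=
  (if K ≤ m + n then ((m : ℝ) + (n : ℝ)) else 0)
    - (if K ≤ m then (m : ℝ) else 0) - (if K ≤ n then (n : ℝ) else 0)

/-- The tail mass of the profile `f` above level `r`: `∑_{n ≥ r} n · f_n`. -/
noncomputable def tailMass (f : ℕ → ℝ) (r : ℕ) : ℝ :=
  ∑' n : ℕ, ((n : ℝ) + (r : ℝ)) * f (n + r)

def deltaMassInt (K m n : ℕ) : ℤ :=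
  (if K ≤ m + n then (m + n : ℤ) else 0) - (if K ≤ m then (m : ℤ) else 0)
    - (if K ≤ n then (n : ℤ) else 0)

lemma deltaMass_eq_intCast (K m n : ℕ) : deltaMass K m n = deltaMassInt K m n := by
  unfold deltaMass deltaMassInt
  split_ifs <;> push_cast <;> ring

lemma deltaMass_le_add (K m n : ℕ) : deltaMass K m n ≤ m + n := by
  rw [deltaMass_eq_intCast]
  exact_mod_cast show deltaMassInt K m n ≤ m + n by unfold deltaMassInt; split_ifs <;> omega

lemma ite_add_ite_le_deltaMass (k m n : ℕ) :
    (if k ≤ m ∧ n ≤ k then (n : ℝ) else 0) + (if m ≤ k ∧ k ≤ n then (m : ℝ) else 0)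
      ≤ deltaMass (k + 1) m n := by
  rw [deltaMass_eq_intCast]
  exact_mod_cast show (if k ≤ m ∧ n ≤ k then (n : ℤ) else 0)
      + (if m ≤ k ∧ k ≤ n then (m : ℤ) else 0) ≤ deltaMassInt (k + 1) m n by
    unfold deltaMassInt; split_ifs <;> omega

lemma add_le_two_mul_of_one_le {a b : ℝ} (ha : 1 ≤ a) (hb : 1 ≤ b) : a + b ≤ 2 * (a * b) := by
  nlinarith

lemma rpow_add_rpow_mul_add_le {x y q : ℝ} (hx : 1 ≤ x) (hy : 1 ≤ y) (hq : 0 ≤ q) :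
    (x ^ q + y ^ q) * (x + y) ≤ 4 * (x ^ (q + 1) * y ^ (q + 1)) := by
  rw [Real.rpow_add_one (by positivity), Real.rpow_add_one (by positivity)]
  have hxq := Real.one_le_rpow hx hq
  have hyq := Real.one_le_rpow hy hq
  calc (x ^ q + y ^ q) * (x + y) ≤ (2 * (x ^ q * y ^ q)) * (2 * (x * y)) := by
        gcongr
        exacts [add_le_two_mul_of_one_le hxq hyq, add_le_two_mul_of_one_le hx hy]
    _ = 4 * (x ^ q * x * (y ^ q * y)) := by ring

lemma Summable.ite_zero {ι α : Type*} [UniformSpace α] [AddCommGroup α] [IsUniformAddGroup α]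
    [CompleteSpace α] {f : ι → α} (hf : Summable f) (p : ι → Prop) [DecidablePred p] :
    Summable fun i => if p i then f i else 0 := by
  convert hf.indicator {i | p i} using 1
  ext i
  simp [Set.indicator_apply]

lemma Summable.of_rpow_mul_of_exponent_le {ι : Type*} {x f : ι → ℝ} {s t : ℝ}
    (hx : ∀ i, 1 ≤ x i) (hf : ∀ i, 0 ≤ f i) (hst : s ≤ t)
    (h : Summable fun i => x i ^ t * f i) : Summable fun i => x i ^ s * f i :=
  h.of_nonneg_of_le (fun i => mul_nonneg (by have := hx i; positivity) (hf i))
    fun i => mul_le_mul_of_nonneg_right (Real.rpow_le_rpow_of_exponent_le (hx i) hst) (hf i)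

theorem two_mul_tsum_mul_tsum_le_tsum_tsum {ι : Type*} {u v a b : ι → ℝ} {T : ι → ι → ℝ}
    (hu : Summable u) (hv : Summable v) (hu0 : ∀ i, 0 ≤ u i) (hv0 : ∀ i, 0 ≤ v i)
    (ha : Summable a) (hb : Summable b) (ha0 : ∀ i, 0 ≤ a i) (hb0 : ∀ i, 0 ≤ b i)
    (hle : ∀ m n, u m * v n + v m * u n ≤ T m n) (hT : ∀ m n, T m n ≤ a m * b n) :
    2 * ((∑' i, u i) * ∑' i, v i) ≤ ∑' m, ∑' n, T m n := by
  have huv := hu.mul_of_nonneg hv (Pi.le_def.mpr hu0) (Pi.le_def.mpr hv0)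
  have hvu := hv.mul_of_nonneg hu (Pi.le_def.mpr hv0) (Pi.le_def.mpr hu0)
  have hT0 : ∀ p : ι × ι, 0 ≤ T p.1 p.2 := fun p =>
    (add_nonneg (mul_nonneg (hu0 _) (hv0 _)) (mul_nonneg (hv0 _) (hu0 _))).trans (hle _ _)
  have hTsum : Summable fun p : ι × ι => T p.1 p.2 :=
    (ha.mul_of_nonneg hb (Pi.le_def.mpr ha0) (Pi.le_def.mpr hb0)).of_nonneg_of_le hT0
      fun p => hT p.1 p.2
  calc 2 * ((∑' i, u i) * ∑' i, v i)
      = (∑' i, u i) * (∑' i, v i) + (∑' i, v i) * ∑' i, u i := by ring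
    _ = ∑' p : ι × ι, (u p.1 * v p.2 + v p.1 * u p.2) := by
      rw [hu.tsum_mul_tsum hv huv, hv.tsum_mul_tsum hu hvu, huv.tsum_add hvu]
    _ ≤ ∑' p : ι × ι, T p.1 p.2 := (huv.add hvu).tsum_le_tsum (fun p => hle p.1 p.2) hTsum
    _ = ∑' m, ∑' n, T m n := hTsum.tsum_prod

lemma rpow_sub_one_mul_le_rpow {a x q : ℝ} (ha : 0 ≤ a) (hax : a ≤ x) (hq : 1 ≤ q) :
    a ^ (q - 1) * x ≤ x ^ q := by
  have hx : 0 ≤ x := ha.trans hax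
  calc a ^ (q - 1) * x ≤ x ^ (q - 1) * x := by gcongr
    _ = x ^ q := by rw [← Real.rpow_add_one' hx (by linarith), sub_add_cancel]

-- The size-0 term `0 * f 0` vanishes, so passing to the sizes `i + 1` loses nothing.
lemma tailMass_eq_tsum_ite (f : ℕ → ℝ) (r : ℕ) :
    tailMass f r = ∑' i : ℕ, if r ≤ i + 1 then ((i : ℝ) + 1) * f (i + 1) else 0 := by
  set F : ℕ → ℝ := fun n => if r ≤ n then (n : ℝ) * f n else 0
  have h_add : tailMass f r = ∑' n, F (n + r) := by
    unfold tailMass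
    congr with n
    simp [F]
  have h_succ : (∑' i : ℕ, if r ≤ i + 1 then ((i : ℝ) + 1) * f (i + 1) else 0)
      = ∑' i, F (i + 1) := by
    congr with n
    simp [F]
  rw [h_add, h_succ, (add_left_injective r).tsum_eq, (add_left_injective 1).tsum_eq]
  · intro n hn
    have : n ≠ 0 := by rintro rfl; simp [F] at hn
    exact ⟨n - 1, Nat.sub_add_cancel (Nat.one_le_iff_ne_zero.mpr this)⟩
  · intro n hn
    have : r ≤ n := by by_contra h; simp [F, h] at hn
    exact ⟨n - r, Nat.sub_add_cancel this⟩

lemma rpow_sub_one_mul_tailMass_le {f : ℕ → ℝ} {q : ℝ} (hq : 1 ≤ q) (hf : ∀ n, 0 ≤ f n)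
    (hp : Summable fun i : ℕ => ((i : ℝ) + 1) ^ q * f (i + 1)) (k : ℕ) :
    (k : ℝ) ^ (q - 1) * tailMass f k
      ≤ ∑' i : ℕ, if k ≤ i + 1 then ((i : ℝ) + 1) ^ q * f (i + 1) else 0 := by
  have hle : ∀ i : ℕ, (k : ℝ) ^ (q - 1) * (if k ≤ i + 1 then ((i : ℝ) + 1) * f (i + 1) else 0)
      ≤ if k ≤ i + 1 then ((i : ℝ) + 1) ^ q * f (i + 1) else 0 := by
    intro i
    split_ifs with hki
    · rw [← mul_assoc]
      gcongr
      · exact hf _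
      · exact rpow_sub_one_mul_le_rpow k.cast_nonneg (by exact_mod_cast hki) hq
    · simp
  have hmoment := hp.ite_zero fun i => k ≤ i + 1
  rw [tailMass_eq_tsum_ite, ← tsum_mul_left]
  refine Summable.tsum_le_tsum hle (hmoment.of_nonneg_of_le (fun i => ?_) hle) hmoment
  have := hf (i + 1)
  split_ifs <;> positivity

lemma tsum_ite_le_eq_one_sub_tailMass {f : ℕ → ℝ}
    (hg : Summable fun i : ℕ => ((i : ℝ) + 1) * f (i + 1))
    (hmass : ∑' i : ℕ, ((i : ℝ) + 1) * f (i + 1) = 1) (k : ℕ) :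
    ∑' i : ℕ, (if i + 1 ≤ k then ((i : ℝ) + 1) * f (i + 1) else 0) = 1 - tailMass f (k + 1) := by
  have hsplit : ∀ i : ℕ, ((i : ℝ) + 1) * f (i + 1)
      = (if i + 1 ≤ k then ((i : ℝ) + 1) * f (i + 1) else 0)
        + (if k + 1 ≤ i + 1 then ((i : ℝ) + 1) * f (i + 1) else 0) := by
    intro i
    split_ifs <;> first | omega | simp
  rw [tailMass_eq_tsum_ite, eq_sub_iff_add_eq, ← (hg.ite_zero _).tsum_add (hg.ite_zero _)]
  exact (tsum_congr fun i => (hsplit i).symm).trans hmass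

lemma coagulation_summand_le {f : ℕ → ℝ} {q : ℝ} (hq : 0 ≤ q) (hf : ∀ n, 0 ≤ f n)
    (K m n : ℕ) :
    (((m : ℝ) + 1) ^ q + ((n : ℝ) + 1) ^ q) * f (m + 1) * f (n + 1) * deltaMass K (m + 1) (n + 1)
      ≤ 4 * (((m : ℝ) + 1) ^ (q + 1) * f (m + 1)) * (((n : ℝ) + 1) ^ (q + 1) * f (n + 1)) := by
  have hD := deltaMass_le_add K (m + 1) (n + 1)
  push_cast at hD
  have hfm := hf (m + 1)
  have hfn := hf (n + 1)
  calc _ ≤ (((m : ℝ) + 1) ^ q + ((n : ℝ) + 1) ^ q) * f (m + 1) * f (n + 1)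
          * (((m : ℝ) + 1) + ((n : ℝ) + 1)) := by gcongr
    _ = (((m : ℝ) + 1) ^ q + ((n : ℝ) + 1) ^ q) * (((m : ℝ) + 1) + ((n : ℝ) + 1))
          * (f (m + 1) * f (n + 1)) := by ring
    _ ≤ 4 * (((m : ℝ) + 1) ^ (q + 1) * ((n : ℝ) + 1) ^ (q + 1)) * (f (m + 1) * f (n + 1)) := by
      refine mul_le_mul_of_nonneg_right ?_ (mul_nonneg hfm hfn)
      exact rpow_add_rpow_mul_add_le (le_add_of_nonneg_left m.cast_nonneg)
        (le_add_of_nonneg_left n.cast_nonneg) hq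
    _ = _ := by ring

lemma ite_mul_ite_add_ite_mul_ite_le_coagulation_summand {f : ℕ → ℝ} {q : ℝ}
    (hf : ∀ n, 0 ≤ f n) (k m n : ℕ) :
    (if k ≤ m + 1 then ((m : ℝ) + 1) ^ q * f (m + 1) else 0)
        * (if n + 1 ≤ k then ((n : ℝ) + 1) * f (n + 1) else 0)
      + (if m + 1 ≤ k then ((m : ℝ) + 1) * f (m + 1) else 0)
        * (if k ≤ n + 1 then ((n : ℝ) + 1) ^ q * f (n + 1) else 0)
      ≤ (((m : ℝ) + 1) ^ q + ((n : ℝ) + 1) ^ q) * f (m + 1) * f (n + 1)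
          * deltaMass (k + 1) (m + 1) (n + 1) := by
  have hD := ite_add_ite_le_deltaMass k (m + 1) (n + 1)
  push_cast at hD
  have hfm := hf (m + 1)
  have hfn := hf (n + 1)
  rw [ite_zero_mul_ite_zero, ite_zero_mul_ite_zero]
  calc _ ≤ (((m : ℝ) + 1) ^ q + ((n : ℝ) + 1) ^ q) * f (m + 1) * f (n + 1)
          * ((if k ≤ m + 1 ∧ n + 1 ≤ k then (n : ℝ) + 1 else 0)
            + (if m + 1 ≤ k ∧ k ≤ n + 1 then (m : ℝ) + 1 else 0)) := by
        rw [mul_add]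
        have hy : 0 ≤ ((n : ℝ) + 1) ^ q * (f (m + 1) * f (n + 1)) * ((n : ℝ) + 1) := by positivity
        have hx : 0 ≤ ((m : ℝ) + 1) ^ q * (f (m + 1) * f (n + 1)) * ((m : ℝ) + 1) := by positivity
        gcongr <;> split_ifs <;> first | rfl | nlinarith
    _ ≤ _ := by gcongr

theorem flux_into_large_clusters_lower_bound_general
    (q : ℝ) (hq : 1 ≤ q) (k : ℕ)
    (f : ℕ → ℝ) (hf : ∀ n : ℕ, 0 ≤ f n)
    (hmass : ∑' n : ℕ, ((n : ℝ) + 1) * f (n + 1) = 1)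
    (hmoment : Summable (fun n : ℕ => ((n : ℝ) + 1) ^ (q + 1) * f (n + 1))) :
    (k : ℝ) ^ (q - 1) * tailMass f k * (1 - tailMass f (k + 1))
      ≤ (1 / 2) * ∑' (m : ℕ) (n : ℕ),
          (((m : ℝ) + 1) ^ q + ((n : ℝ) + 1) ^ q) * f (m + 1) * f (n + 1)
            * deltaMass (k + 1) (m + 1) (n + 1) := by
  have hx : ∀ i : ℕ, 1 ≤ (i : ℝ) + 1 := fun i => le_add_of_nonneg_left i.cast_nonneg
  have hf' : ∀ i : ℕ, 0 ≤ f (i + 1) := fun i => hf _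
  have hp := Summable.of_rpow_mul_of_exponent_le hx hf' (by linarith : q ≤ q + 1) hmoment
  have hg : Summable fun i : ℕ => ((i : ℝ) + 1) * f (i + 1) := by
    simpa using Summable.of_rpow_mul_of_exponent_le hx hf' (by linarith : 1 ≤ q + 1) hmoment
  have hmoment0 : ∀ i : ℕ, 0 ≤ ((i : ℝ) + 1) ^ (q + 1) * f (i + 1) :=
    fun i => mul_nonneg (by positivity) (hf' i)
  have hv0 : ∀ i : ℕ, 0 ≤ if i + 1 ≤ k then ((i : ℝ) + 1) * f (i + 1) else 0 := fun i => by
    have := hf' i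
    split_ifs <;> positivity
  set U := ∑' i : ℕ, if k ≤ i + 1 then ((i : ℝ) + 1) ^ q * f (i + 1) else 0
  set V := ∑' i : ℕ, if i + 1 ≤ k then ((i : ℝ) + 1) * f (i + 1) else 0
  have hU : (k : ℝ) ^ (q - 1) * tailMass f k ≤ U := rpow_sub_one_mul_tailMass_le hq hf hp k
  have hV : V = 1 - tailMass f (k + 1) := tsum_ite_le_eq_one_sub_tailMass hg hmass k
  have hflux : 2 * (U * V) ≤ _ := two_mul_tsum_mul_tsum_le_tsum_tsum (hp.ite_zero _)
    (hg.ite_zero _) (fun i => by have := hf' i; split_ifs <;> positivity)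
    hv0 (hmoment.mul_left 4) hmoment (fun i => by have := hmoment0 i; positivity) hmoment0
    (ite_mul_ite_add_ite_mul_ite_le_coagulation_summand hf k)
    (coagulation_summand_le (by linarith) hf (k + 1))
  rw [← hV]
  calc (k : ℝ) ^ (q - 1) * tailMass f k * V ≤ U * V :=
        mul_le_mul_of_nonneg_right hU (tsum_nonneg hv0)
    _ ≤ _ := by linarith

/-- If `q ≥ 1`, `k ≥ 1` and `f : ℕ → [0,∞)` has unit mass `∑_{n≥1} n f_n = 1` and a
finite `(q+1)`-moment, then the coagulation flux of mass into clusters of size at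
least `k+1` for the kernel `m^q + n^q` is at least `k^{q-1} M_k (1 − M_{k+1})`. -/
theorem flux_into_large_clusters_lower_bound
    (q : ℝ) (hq : 1 ≤ q) (k : ℕ) (hk : 1 ≤ k)
    (f : ℕ → ℝ) (hf : ∀ n : ℕ, 0 ≤ f n)
    (hmass : ∑' n : ℕ, ((n : ℝ) + 1) * f (n + 1) = 1)
    (hmoment : Summable (fun n : ℕ => ((n : ℝ) + 1) ^ (q + 1) * f (n + 1))) :
    (k : ℝ) ^ (q - 1) * tailMass f k * (1 - tailMass f (k + 1))
      ≤ (1 / 2) * ∑' (m : ℕ) (n : ℕ),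
          (((m : ℝ) + 1) ^ q + ((n : ℝ) + 1) ^ q) * f (m + 1) * f (n + 1)
            * deltaMass (k + 1) (m + 1) (n + 1) :=
  flux_into_large_clusters_lower_bound_general q hq k f hf hmass hmoment
end

section
/- Let q > 1, let p ≥ 2 be real, let ℓ ≥ 1 be an integer, and set β = (q−1)/(p−1). Let f : ℕ → [0,∞) satisfy ∑_{n≥1} n·f_n = 1, ∑_{n≥1} n^{p+q−1}·f_n < ∞, and G_ℓ := ∑_{n≥ℓ} n·f_n > 0. Then (1/2)·∑_{m≥1} ∑_{n≥1} (m^q + n^q)·f_m·f_n·[ (m+n)^p·1[m+n ≥ ℓ+1] − m^p·1[m ≥ ℓ+1] − n^p·1[n ≥ ℓ+1] ] ≥ p·G_ℓ^{−β}·( ∑_{n≥ℓ} n^p·f_n )^{1+β}·(1 − G_ℓ). -/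
/-!
Merging a cluster of size `a ≥ ℓ` with one of size `1 ≤ b < ℓ` raises `ψ` by at least
`(a + b)^p - a^p ≥ p a^(p-1) b` (tangent line of the convex `t ↦ t^p`), and the kernel is at
least `a^q`. Keeping only such pairs, the flux is at least `p T (1 - G_ℓ)`, where
`T = ∑_{n ≥ ℓ} n^(p+q-1) f_n` and `1 - G_ℓ = ∑_{n < ℓ} n f_n`. Hölder's inequality
interpolates the `p`-th tail moment between the first and the `(p+q-1)`-th one,
`M_p ≤ G_ℓ^θ T^(1-θ)` with `θ = (q-1)/(p+q-2)`, which is `G_ℓ^(-β) M_p^(1+β) ≤ T`.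
The double series converges because `Δ(a, b) ≤ C (a b)^(p-1)`, so that the finite
`(p+q-1)`-moment dominates it.
-/

/-- `Δ^p_K(m,n) = (m+n)^p·1[m+n ≥ K] − m^p·1[m ≥ K] − n^p·1[n ≥ K]`, the change of
the test function `ψ(j) = j^p·1[j ≥ K]` when clusters of sizes `m` and `n` merge. -/
noncomputable def deltaPow (p : ℝ) (K m n : ℕ) : ℝ :=
  (if K ≤ m + n then ((m : ℝ) + (n : ℝ)) ^ p else 0)
    - (if K ≤ m then (m : ℝ) ^ p else 0) - (if K ≤ n then (n : ℝ) ^ p else 0)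

open Real Finset

theorem rpow_add_mul_sub_le_rpow {p x y : ℝ} (hp : 1 ≤ p) (hx : 0 < x) (hy : 0 ≤ y) :
    x ^ p + p * x ^ (p - 1) * (y - x) ≤ y ^ p := by
  have bernoulli : 1 + p * (y / x - 1) ≤ (1 + (y / x - 1)) ^ p :=
    one_add_mul_self_le_rpow_one_add (by linarith [div_nonneg hy hx.le]) hp
  rw [add_sub_cancel, div_rpow hy hx.le, le_div_iff₀ (rpow_pos_of_pos hx p)] at bernoulli
  calc x ^ p + p * x ^ (p - 1) * (y - x) = (1 + p * (y / x - 1)) * x ^ p := by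
        rw [rpow_sub_one hx.ne']; field_simp
    _ ≤ y ^ p := bernoulli

theorem tsum_rpow_mul_le_interpolate {ι : Type*} {x w : ι → ℝ} (hx : ∀ i, 0 ≤ x i)
    (hw : ∀ i, 0 ≤ w i) {θ a c : ℝ} (hθ₀ : 0 < θ) (hθ₁ : θ < 1)
    (hac : θ * a + (1 - θ) * c ≠ 0)
    (ha : Summable fun i => x i ^ a * w i) (hc : Summable fun i => x i ^ c * w i) :
    ∑' i, x i ^ (θ * a + (1 - θ) * c) * w i
      ≤ (∑' i, x i ^ a * w i) ^ θ * (∑' i, x i ^ c * w i) ^ (1 - θ) := by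
  have hconj := holderConjugate_one_div hθ₀ (sub_pos.2 hθ₁) (add_sub_cancel θ 1)
  have hpow : ∀ {r s : ℝ}, s ≠ 0 → ∀ i, ((x i ^ r * w i) ^ s) ^ (1 / s) = x i ^ r * w i :=
    fun hs i => by
      rw [← rpow_mul (mul_nonneg (rpow_nonneg (hx i) _) (hw i)), mul_one_div_cancel hs, rpow_one]
  have hprod : ∀ i, (x i ^ a * w i) ^ θ * (x i ^ c * w i) ^ (1 - θ)
      = x i ^ (θ * a + (1 - θ) * c) * w i := fun i => by
    rw [mul_rpow (rpow_nonneg (hx i) a) (hw i), mul_rpow (rpow_nonneg (hx i) c) (hw i),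
      ← rpow_mul (hx i), ← rpow_mul (hx i), mul_mul_mul_comm, mul_comm a, mul_comm c,
      ← rpow_add' (hx i) hac, ← rpow_add' (hw i) (by norm_num), add_sub_cancel, rpow_one]
  have holder := inner_le_Lp_mul_Lq_tsum_of_nonneg hconj
    (fun i => rpow_nonneg (mul_nonneg (rpow_nonneg (hx i) a) (hw i)) θ)
    (fun i => rpow_nonneg (mul_nonneg (rpow_nonneg (hx i) c) (hw i)) (1 - θ))
    (ha.congr fun i => (hpow hθ₀.ne' i).symm)
    (hc.congr fun i => (hpow (sub_pos.2 hθ₁).ne' i).symm)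
  simpa only [hprod, hpow hθ₀.ne', hpow (sub_pos.2 hθ₁).ne', one_div_one_div] using holder

theorem rpow_neg_mul_rpow_le_tsum_rpow_mul {ι : Type*} {x w : ι → ℝ} (hx : ∀ i, 0 ≤ x i)
    (hw : ∀ i, 0 ≤ w i) {p q : ℝ} (hp : 1 < p) (hq : 1 < q)
    (h₁ : Summable fun i => x i * w i) (hpq : Summable fun i => x i ^ (p + q - 1) * w i)
    (hG : 0 < ∑' i, x i * w i) :
    (∑' i, x i * w i) ^ (-((q - 1) / (p - 1))) * (∑' i, x i ^ p * w i) ^ (1 + (q - 1) / (p - 1))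
      ≤ ∑' i, x i ^ (p + q - 1) * w i := by
  set G := ∑' i, x i * w i
  set T := ∑' i, x i ^ (p + q - 1) * w i
  have hpq₂ : 0 < p + q - 2 := by linarith
  have hp₁ : p - 1 ≠ 0 := by linarith
  set θ := (q - 1) / (p + q - 2) with hθ
  have hθ₀ : 0 < θ := div_pos (by linarith) hpq₂
  have hθ₁ : θ < 1 := (div_lt_one hpq₂).2 (by linarith)
  have hexp : θ * 1 + (1 - θ) * (p + q - 1) = p := by rw [hθ]; field_simp; ring
  have h1θ : (1 - θ)⁻¹ = (p + q - 2) / (p - 1) := by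
    rw [← inv_div, hθ, one_sub_div hpq₂.ne']; ring_nf
  have hP : 1 + (q - 1) / (p - 1) = (1 - θ)⁻¹ := by rw [h1θ]; field_simp; ring
  have hβ : -((q - 1) / (p - 1)) + θ * (1 - θ)⁻¹ = 0 := by rw [h1θ, hθ]; field_simp; ring
  have hT : 0 ≤ T := tsum_nonneg fun i => mul_nonneg (rpow_nonneg (hx i) _) (hw i)
  have hM : ∑' i, x i ^ p * w i ≤ G ^ θ * T ^ (1 - θ) := by
    have := tsum_rpow_mul_le_interpolate hx hw hθ₀ hθ₁ (by rw [hexp]; linarith)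
      (h₁.congr fun i => by rw [rpow_one]) hpq
    simpa only [hexp, rpow_one] using this
  calc G ^ (-((q - 1) / (p - 1))) * (∑' i, x i ^ p * w i) ^ (1 + (q - 1) / (p - 1))
      ≤ G ^ (-((q - 1) / (p - 1))) * (G ^ θ * T ^ (1 - θ)) ^ (1 - θ)⁻¹ := by
        rw [hP]
        gcongr
        exact tsum_nonneg fun i => mul_nonneg (rpow_nonneg (hx i) _) (hw i)
    _ = T := by
        rw [mul_rpow (by positivity) (by positivity), ← rpow_mul hG.le, ← rpow_mul hT,
          mul_inv_cancel₀ (sub_pos.2 hθ₁).ne', rpow_one, ← mul_assoc, ← rpow_add hG, hβ,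
          rpow_zero, one_mul]

section deltaPow

variable {p : ℝ} {K a b : ℕ}

theorem deltaPow_comm (p : ℝ) (K a b : ℕ) : deltaPow p K a b = deltaPow p K b a := by
  unfold deltaPow
  rw [add_comm b, add_comm (b : ℝ)]
  ring

theorem deltaPow_nonneg (hp : 1 ≤ p) : 0 ≤ deltaPow p K a b := by
  have ha : (0 : ℝ) ≤ a := a.cast_nonneg
  have hb : (0 : ℝ) ≤ b := b.cast_nonneg
  have hab := add_rpow_le_rpow_add ha hb hp
  have hpa : (a : ℝ) ^ p ≤ (a + b) ^ p := rpow_le_rpow ha (by linarith) (by linarith)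
  have hpb : (b : ℝ) ^ p ≤ (a + b) ^ p := rpow_le_rpow hb (by linarith) (by linarith)
  unfold deltaPow
  split_ifs <;> first | omega | linarith [rpow_nonneg ha p, rpow_nonneg hb p]

theorem mul_rpow_sub_one_mul_le_deltaPow (hp : 1 ≤ p) (ha : 1 ≤ a) (hK : K ≤ a + b)
    (hb : b < K) : p * (a : ℝ) ^ (p - 1) * b ≤ deltaPow p K a b := by
  have ha₀ : (0 : ℝ) < a := by exact_mod_cast ha
  have tangent := rpow_add_mul_sub_le_rpow hp ha₀ (by positivity : (0 : ℝ) ≤ a + b)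
  have hpa : 0 ≤ (a : ℝ) ^ p := rpow_nonneg ha₀.le p
  unfold deltaPow
  rw [if_pos hK, if_neg (not_le.2 hb)]
  split_ifs <;> linarith

theorem deltaPow_le_of_le (hp : 1 ≤ p) (ha : 1 ≤ a) (hab : a ≤ b) :
    deltaPow p K a b ≤ p * (2 * b : ℝ) ^ (p - 1) * a + (K : ℝ) ^ p := by
  have ha₀ : (0 : ℝ) < a := by exact_mod_cast ha
  have hab' : (a : ℝ) ≤ b := by exact_mod_cast hab
  -- the tangent line of `t ↦ t ^ p` at `a + b`, evaluated at `b`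
  have tangent := rpow_add_mul_sub_le_rpow hp (by positivity : (0 : ℝ) < a + b) (b.cast_nonneg)
  have hmono : ((a : ℝ) + b) ^ (p - 1) ≤ (2 * b) ^ (p - 1) :=
    rpow_le_rpow (by positivity) (by linarith) (by linarith)
  have hb : (b : ℝ) ^ p - (K : ℝ) ^ p ≤ if K ≤ b then (b : ℝ) ^ p else 0 := by
    split_ifs with hKb
    · linarith [rpow_nonneg K.cast_nonneg p]
    · exact sub_nonpos.2 (rpow_le_rpow b.cast_nonneg (by exact_mod_cast (not_le.1 hKb).le)
        (by linarith))
  have hpa : 0 ≤ if K ≤ a then (a : ℝ) ^ p else 0 := by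
    split_ifs <;> [exact rpow_nonneg ha₀.le p; rfl]
  have hab₀ : (if K ≤ a + b then ((a : ℝ) + b) ^ p else 0) ≤ ((a : ℝ) + b) ^ p := by
    split_ifs <;> [rfl; positivity]
  unfold deltaPow
  have hpa₀ : 0 ≤ p * (a : ℝ) := mul_nonneg (by linarith) ha₀.le
  nlinarith [mul_le_mul_of_nonneg_right hmono hpa₀]

theorem deltaPow_le_mul (hp : 2 ≤ p) (ha : 1 ≤ a) (hb : 1 ≤ b) :
    deltaPow p K a b
      ≤ (p * 2 ^ (p - 1) + (K : ℝ) ^ p) * ((a : ℝ) ^ (p - 1) * (b : ℝ) ^ (p - 1)) := by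
  wlog hab : a ≤ b generalizing a b
  · rw [deltaPow_comm, mul_comm ((a : ℝ) ^ (p - 1))]
    exact this hb ha (le_of_not_ge hab)
  have ha₁ : (1 : ℝ) ≤ a := by exact_mod_cast ha
  have hb₁ : (1 : ℝ) ≤ b := by exact_mod_cast hb
  have hap : (a : ℝ) ≤ (a : ℝ) ^ (p - 1) := self_le_rpow_of_one_le ha₁ (by linarith)
  have hbp : 1 ≤ (b : ℝ) ^ (p - 1) := one_le_rpow hb₁ (by linarith)
  have hKp : 0 ≤ (K : ℝ) ^ p := rpow_nonneg K.cast_nonneg p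
  have h2p : 0 ≤ p * (2 : ℝ) ^ (p - 1) * (b : ℝ) ^ (p - 1) := by positivity
  calc deltaPow p K a b ≤ p * (2 * b : ℝ) ^ (p - 1) * a + (K : ℝ) ^ p :=
        deltaPow_le_of_le (by linarith) ha hab
    _ = p * 2 ^ (p - 1) * (b : ℝ) ^ (p - 1) * a + (K : ℝ) ^ p := by
        rw [mul_rpow zero_le_two b.cast_nonneg]; ring
    _ ≤ _ := by
        nlinarith [mul_le_mul_of_nonneg_left hap h2p,
          one_le_mul_of_one_le_of_one_le (ha₁.trans hap) hbp]

end deltaPow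

theorem summable_natCast_rpow_mul_of_le {f : ℕ → ℝ} (hf : ∀ n, 0 ≤ f n) {r s : ℝ}
    (hrs : r ≤ s)
    (hs : Summable fun n : ℕ => ((n : ℝ) + 1) ^ s * f (n + 1)) :
    Summable fun k : ℕ => (k : ℝ) ^ r * f k := by
  refine (summable_nat_add_iff 1).1 (hs.of_nonneg_of_le (fun n => ?_) fun n => ?_)
  · exact mul_nonneg (rpow_nonneg n.succ.cast_nonneg r) (hf _)
  · push_cast
    have hn : (1 : ℝ) ≤ n + 1 := le_add_of_nonneg_left n.cast_nonneg
    exact mul_le_mul_of_nonneg_right (rpow_le_rpow_of_exponent_le hn hrs) (hf _)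

theorem two_mul_tsum_mul_tsum_le_tsum_tsum_s4 {ι : Type*} {F : ι → ι → ℝ}
    {c d u v : ι → ℝ}
    (hF : ∀ m n, 0 ≤ F m n) (hFuv : ∀ m n, F m n ≤ u m * v n) (hu : Summable u)
    (hv : Summable v) (hc : Summable c) (hd : Summable d)
    (hcd : ∀ m n, c m * d n + d m * c n ≤ F m n) :
    2 * (∑' m, c m) * (∑' n, d n) ≤ ∑' m, ∑' n, F m n := by
  have hrow : ∀ m, Summable (F m) := fun m =>
    (hv.mul_left (u m)).of_nonneg_of_le (hF m) (hFuv m)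
  have hcol : Summable fun m => ∑' n, F m n :=
    (hu.mul_right (∑' n, v n)).of_nonneg_of_le (fun m => tsum_nonneg (hF m)) fun m => by
      rw [← tsum_mul_left]; exact (hrow m).tsum_le_tsum (hFuv m) (hv.mul_left _)
  have hinner : ∀ m, c m * ∑' n, d n + d m * ∑' n, c n ≤ ∑' n, F m n := fun m => by
    rw [← tsum_mul_left, ← tsum_mul_left, ← (hd.mul_left _).tsum_add (hc.mul_left _)]
    exact ((hd.mul_left _).add (hc.mul_left _)).tsum_le_tsum (hcd m) (hrow m)
  calc 2 * (∑' m, c m) * (∑' n, d n)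
      = ∑' m, (c m * ∑' n, d n + d m * ∑' n, c n) := by
        rw [(hc.mul_right _).tsum_add (hd.mul_right _), tsum_mul_right, tsum_mul_right]; ring
    _ ≤ ∑' m, ∑' n, F m n := ((hc.mul_right _).add (hd.mul_right _)).tsum_le_tsum hinner hcol

noncomputable def fluxTerm (q p : ℝ) (K : ℕ) (f : ℕ → ℝ) (a b : ℕ) : ℝ :=
  ((a : ℝ) ^ q + (b : ℝ) ^ q) * f a * f b * deltaPow p K a b

theorem fluxTerm_comm (q p : ℝ) (K : ℕ) (f : ℕ → ℝ) (a b : ℕ) :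
    fluxTerm q p K f a b = fluxTerm q p K f b a := by
  unfold fluxTerm
  rw [deltaPow_comm]
  ring

section fluxTerm

variable {q p : ℝ} {K : ℕ} {f : ℕ → ℝ} {a b : ℕ}

theorem fluxTerm_nonneg (hp : 1 ≤ p) (hf : ∀ n, 0 ≤ f n) : 0 ≤ fluxTerm q p K f a b := by
  unfold fluxTerm
  have := deltaPow_nonneg (K := K) (a := a) (b := b) hp
  have := hf a
  have := hf b
  positivity

theorem fluxTerm_le_mul (hp : 2 ≤ p) (hq : 0 ≤ q) (hf : ∀ n, 0 ≤ f n) (ha : 1 ≤ a)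
    (hb : 1 ≤ b) :
    fluxTerm q p K f a b
      ≤ (2 * (p * 2 ^ (p - 1) + (K : ℝ) ^ p) * ((a : ℝ) ^ (p + q - 1) * f a))
        * ((b : ℝ) ^ (p + q - 1) * f b) := by
  have ha₀ : (0 : ℝ) < a := by exact_mod_cast ha
  have hb₀ : (0 : ℝ) < b := by exact_mod_cast hb
  have hker : (a : ℝ) ^ q + (b : ℝ) ^ q ≤ 2 * ((a : ℝ) ^ q * (b : ℝ) ^ q) := by
    have := one_le_rpow (by exact_mod_cast ha : (1 : ℝ) ≤ a) hq
    have := one_le_rpow (by exact_mod_cast hb : (1 : ℝ) ≤ b) hq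
    nlinarith
  have hsplit : ∀ x : ℝ, 0 < x → x ^ (p + q - 1) = x ^ q * x ^ (p - 1) := fun x hx => by
    rw [← rpow_add hx]; ring_nf
  have hfab : 0 ≤ f a * f b := mul_nonneg (hf a) (hf b)
  unfold fluxTerm
  calc ((a : ℝ) ^ q + (b : ℝ) ^ q) * f a * f b * deltaPow p K a b
      ≤ (2 * ((a : ℝ) ^ q * (b : ℝ) ^ q)) * f a * f b
          * ((p * 2 ^ (p - 1) + (K : ℝ) ^ p) * ((a : ℝ) ^ (p - 1) * (b : ℝ) ^ (p - 1))) := by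
        rw [mul_assoc _ (f a), mul_assoc _ (f a)]
        gcongr
        · exact deltaPow_nonneg (by linarith)
        · exact deltaPow_le_mul hp ha hb
    _ = _ := by rw [hsplit a ha₀, hsplit b hb₀]; ring

theorem mul_le_fluxTerm (hp : 1 ≤ p) (hf : ∀ n, 0 ≤ f n) (ha : 1 ≤ a) (hK : K ≤ a + b)
    (hb : b < K) : p * (a : ℝ) ^ (p + q - 1) * f a * (b * f b) ≤ fluxTerm q p K f a b := by
  have ha₀ : (0 : ℝ) < a := by exact_mod_cast ha
  have hΔ := mul_rpow_sub_one_mul_le_deltaPow hp ha hK hb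
  have hfab : 0 ≤ f a * f b := mul_nonneg (hf a) (hf b)
  unfold fluxTerm
  calc p * (a : ℝ) ^ (p + q - 1) * f a * (b * f b)
      = (a : ℝ) ^ q * (p * (a : ℝ) ^ (p - 1) * b) * (f a * f b) := by
        rw [show p + q - 1 = q + (p - 1) by ring, rpow_add ha₀]; ring
    _ ≤ ((a : ℝ) ^ q + (b : ℝ) ^ q) * deltaPow p K a b * (f a * f b) := by
        gcongr
        linarith [rpow_nonneg b.cast_nonneg q]
    _ = _ := by ring

theorem tail_mul_head_add_le_fluxTerm {ℓ : ℕ} (hp : 1 ≤ p) (hf : ∀ n, 0 ≤ f n)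
    (ha : 1 ≤ a) (hb : 1 ≤ b) :
    (if ℓ ≤ a then p * (a : ℝ) ^ (p + q - 1) * f a else 0)
        * (if b < ℓ then (b : ℝ) * f b else 0)
      + (if a < ℓ then (a : ℝ) * f a else 0)
        * (if ℓ ≤ b then p * (b : ℝ) ^ (p + q - 1) * f b else 0)
      ≤ fluxTerm q p (ℓ + 1) f a b := by
  have hF : 0 ≤ fluxTerm q p (ℓ + 1) f a b := fluxTerm_nonneg hp hf
  split_ifs <;> try omega
  all_goals simp only [mul_zero, zero_mul, add_zero, zero_add]
  · exact mul_le_fluxTerm hp hf ha (by omega) (by omega)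
  · exact hF
  · exact hF
  · rw [fluxTerm_comm, mul_comm]
    exact mul_le_fluxTerm hp hf hb (by omega) (by omega)

end fluxTerm

theorem two_mul_tail_mul_head_le_tsum_fluxTerm {q p : ℝ} (hp : 2 ≤ p) (hq : 0 ≤ q)
    {f : ℕ → ℝ} (hf : ∀ n, 0 ≤ f n)
    (hmoment : Summable fun n : ℕ => ((n : ℝ) + 1) ^ (p + q - 1) * f (n + 1)) (ℓ : ℕ) :
    2 * (p * ∑' n : ℕ, ((n : ℝ) + ℓ) ^ (p + q - 1) * f (n + ℓ))
        * ∑ k ∈ range ℓ, (k : ℝ) * f k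
      ≤ ∑' (m : ℕ) (n : ℕ), fluxTerm q p (ℓ + 1) f (m + 1) (n + 1) := by
  set c : ℕ → ℝ := fun k => if ℓ ≤ k then p * (k : ℝ) ^ (p + q - 1) * f k else 0
  set d : ℕ → ℝ := fun k => if k < ℓ then (k : ℝ) * f k else 0
  have hmom := summable_natCast_rpow_mul_of_le hf le_rfl hmoment
  have hu : ∀ k : ℕ, 0 ≤ p * (k : ℝ) ^ (p + q - 1) * f k := fun k =>
    mul_nonneg (mul_nonneg (by linarith) (rpow_nonneg k.cast_nonneg _)) (hf k)
  have hc : Summable c := by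
    refine (hmom.mul_left p).of_nonneg_of_le (fun k => ?_) fun k => ?_ <;> simp only [c] <;>
      split_ifs
    · exact hu k
    · rfl
    · rw [← mul_assoc]
    · rw [← mul_assoc]; exact hu k
  have hd : Summable d := summable_of_ne_finset_zero (s := range ℓ) fun k hk => by
    simp only [d, if_neg (mt mem_range.2 hk)]
  have hshift : ∀ g : ℕ → ℝ, Summable g → g 0 = 0 → ∑' m, g (m + 1) = ∑' k, g k :=
    fun g hg hg₀ => by rw [hg.tsum_eq_zero_add, hg₀, zero_add]
  have htail :
      ∑' m, c (m + 1) = p * ∑' n : ℕ, ((n : ℝ) + ℓ) ^ (p + q - 1) * f (n + ℓ) := by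
    rw [hshift c hc (by simp [c, zero_rpow (by linarith : p + q - 1 ≠ 0)]),
      ← hc.sum_add_tsum_nat_add ℓ, sum_eq_zero fun k hk => if_neg (not_le.2 (mem_range.1 hk)),
      zero_add, ← tsum_mul_left]
    refine tsum_congr fun n => ?_
    simp only [c, if_pos (Nat.le_add_left ℓ n)]
    push_cast; ring
  have hhead : ∑' m, d (m + 1) = ∑ k ∈ range ℓ, (k : ℝ) * f k := by
    rw [hshift d hd (by simp [d]), tsum_eq_sum fun k hk => if_neg (mt mem_range.2 hk)]
    exact sum_congr rfl fun k hk => if_pos (mem_range.1 hk)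
  rw [← htail, ← hhead]
  have hmom₁ := (summable_nat_add_iff 1).2 hmom
  refine two_mul_tsum_mul_tsum_le_tsum_tsum_s4
    (F := fun m n => fluxTerm q p (ℓ + 1) f (m + 1) (n + 1))
    (c := fun m => c (m + 1)) (d := fun m => d (m + 1))
    (fun m n => fluxTerm_nonneg (p := p) (by linarith) hf)
    (fun m n => fluxTerm_le_mul hp hq hf m.succ_pos n.succ_pos) (hmom₁.mul_left _) hmom₁
    ((summable_nat_add_iff 1).2 hc) ((summable_nat_add_iff 1).2 hd)
    fun m n => tail_mul_head_add_le_fluxTerm (by linarith) hf m.succ_pos n.succ_pos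

theorem moment_flux_lower_bound_general
    (q p : ℝ) (hq : 1 < q) (hp : 2 ≤ p) (ℓ : ℕ)
    (f : ℕ → ℝ) (hf : ∀ n : ℕ, 0 ≤ f n)
    (hmass : ∑' n : ℕ, ((n : ℝ) + 1) * f (n + 1) = 1)
    (hmoment : Summable (fun n : ℕ => ((n : ℝ) + 1) ^ (p + q - 1) * f (n + 1)))
    (hG : 0 < ∑' n : ℕ, ((n : ℝ) + (ℓ : ℝ)) * f (n + ℓ)) :
    p * (∑' n : ℕ, ((n : ℝ) + (ℓ : ℝ)) * f (n + ℓ)) ^ (-((q - 1) / (p - 1)))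
        * (∑' n : ℕ, ((n : ℝ) + (ℓ : ℝ)) ^ p * f (n + ℓ)) ^ (1 + (q - 1) / (p - 1))
        * (1 - ∑' n : ℕ, ((n : ℝ) + (ℓ : ℝ)) * f (n + ℓ))
      ≤ (1 / 2) * ∑' (m : ℕ) (n : ℕ),
          (((m : ℝ) + 1) ^ q + ((n : ℝ) + 1) ^ q) * f (m + 1) * f (n + 1)
            * deltaPow p (ℓ + 1) (m + 1) (n + 1) := by
  have hsum₁ : Summable fun k : ℕ => (k : ℝ) * f k :=
    (summable_natCast_rpow_mul_of_le hf (r := 1) (by linarith) hmoment).congr fun k => by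
      rw [rpow_one]
  have htail : ∀ r ≤ p + q - 1, Summable fun n : ℕ => ((n : ℝ) + ℓ) ^ r * f (n + ℓ) :=
    fun r hr => ((summable_nat_add_iff ℓ).2 (summable_natCast_rpow_mul_of_le hf hr hmoment)).congr
      fun n => by push_cast; rfl
  have hmass₀ : ∑' k : ℕ, (k : ℝ) * f k = 1 := by
    rw [hsum₁.tsum_eq_zero_add, ← hmass]; push_cast; ring
  have hhead :
      1 - ∑' n : ℕ, ((n : ℝ) + ℓ) * f (n + ℓ) = ∑ k ∈ range ℓ, (k : ℝ) * f k := by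
    rw [← hmass₀, ← hsum₁.sum_add_tsum_nat_add ℓ]; push_cast; ring
  have hinterp := rpow_neg_mul_rpow_le_tsum_rpow_mul (x := fun n : ℕ => (n : ℝ) + ℓ)
    (w := fun n => f (n + ℓ)) (fun n => by positivity) (fun n => hf _) (by linarith) hq
    (by simpa using htail 1 (by linarith)) (htail _ le_rfl) hG
  have hflux := two_mul_tail_mul_head_le_tsum_fluxTerm hp (by linarith) hf hmoment ℓ
  simp only [fluxTerm, Nat.cast_succ] at hflux
  rw [hhead]
  have hhead₀ : 0 ≤ ∑ k ∈ range ℓ, (k : ℝ) * f k :=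
    sum_nonneg fun k _ => mul_nonneg k.cast_nonneg (hf k)
  have := mul_le_mul_of_nonneg_right (mul_le_mul_of_nonneg_left hinterp (by linarith : 0 ≤ p))
    hhead₀
  linarith

/-- If `q > 1`, `p ≥ 2`, `β = (q−1)/(p−1)`, and `f : ℕ → [0,∞)` has unit mass,
finite `(p+q−1)`-moment and positive tail mass `G_ℓ = ∑_{n≥ℓ} n f_n`, then the
coagulation flux for the kernel `m^q + n^q` and test function `j^p·1[j ≥ ℓ+1]` is at
least `p · G_ℓ^{−β} · (∑_{n≥ℓ} n^p f_n)^{1+β} · (1 − G_ℓ)`. -/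
theorem moment_flux_lower_bound
    (q p : ℝ) (hq : 1 < q) (hp : 2 ≤ p) (ℓ : ℕ) (hℓ : 1 ≤ ℓ)
    (f : ℕ → ℝ) (hf : ∀ n : ℕ, 0 ≤ f n)
    (hmass : ∑' n : ℕ, ((n : ℝ) + 1) * f (n + 1) = 1)
    (hmoment : Summable (fun n : ℕ => ((n : ℝ) + 1) ^ (p + q - 1) * f (n + 1)))
    (hG : 0 < ∑' n : ℕ, ((n : ℝ) + (ℓ : ℝ)) * f (n + ℓ)) :
    p * (∑' n : ℕ, ((n : ℝ) + (ℓ : ℝ)) * f (n + ℓ)) ^ (-((q - 1) / (p - 1)))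
        * (∑' n : ℕ, ((n : ℝ) + (ℓ : ℝ)) ^ p * f (n + ℓ)) ^ (1 + (q - 1) / (p - 1))
        * (1 - ∑' n : ℕ, ((n : ℝ) + (ℓ : ℝ)) * f (n + ℓ))
      ≤ (1 / 2) * ∑' (m : ℕ) (n : ℕ),
          (((m : ℝ) + 1) ^ q + ((n : ℝ) + 1) ^ q) * f (m + 1) * f (n + 1)
            * deltaPow p (ℓ + 1) (m + 1) (n + 1) :=
  moment_flux_lower_bound_general q p hq hp ℓ f hf hmass hmoment hG
end

section
/- Let a > 0 be real, let k be a natural number, let ε ≥ 0, and let L : ℕ → ℕ be a finitely supported function with total mass N = ∑_{n≥1} n·L_n ≥ 1. If (1/N)·∑_{m=2^k}^{2^{k+1}−1} m·L_m ≥ ε, then (1/(2N²))·∑_{m≥1} ∑_{n≥1} (mn)^a·L_m·(L_n − 1[m=n])·Δ_{2^{k+1}}(m,n) ≥ 2^{k(2a−1)}·2^{−max(1−a,0)}·ε² − 2^{2a(k+1)}/N. -/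
/-- Total mass `N = ∑_{n ≥ 1} n · L_n` of a particle configuration `L`. -/
noncomputable def totalMass (L : ℕ → ℕ) : ℝ :=
  ∑' n : ℕ, (n : ℝ) * (L n : ℝ)

/-!
Drop every term of the double sum outside the dyadic block `B = [2^k, 2^(k+1))`; this is
legitimate because all terms are nonnegative (`ψ` is superadditive, and
`L_m (L_n - 1[m = n]) ≥ 0` for natural numbers). Two particles of `B` lie below `K = 2^(k+1)`
while their merger does not, so `Δ_K(m, n) = m + n`, and on `B` the kernel obeys
`(mn)^a (m + n) ≥ 2c·mn` with `c = 2^(k(2a-1)) 2^(-(1-a)⁺)`. Summing over `B × B` gives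
at least `2c (M² - ∑_B m² L_m) ≥ 2c (M² - 2^(k+1) M)`, where `M ≥ εN` is the block mass.
The diagonal loss is then absorbed using `M ≤ N` and `c·2^(k+1) ≤ 2^(2a(k+1))`.
-/
open Finset Function

section KernelBound

variable {a A x y : ℝ}

theorem le_rpow_sub_one_of_le_of_le_two_mul (hA : 0 < A) (hx : A ≤ x) (hx' : x ≤ 2 * A) :
    2 ^ (-max (1 - a) 0) * A ^ (a - 1) ≤ x ^ (a - 1) := by
  rcases le_total 1 a with h | h
  · rw [max_eq_right (by linarith), neg_zero, Real.rpow_zero, one_mul]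
    exact Real.rpow_le_rpow hA.le hx (by linarith)
  · rw [max_eq_left (by linarith), neg_sub, ← Real.mul_rpow zero_le_two hA.le]
    exact Real.rpow_le_rpow_of_nonpos (hA.trans_le hx) hx' (by linarith)

theorem two_mul_mul_le_rpow_mul_add (ha : 0 ≤ a) (hA : 0 < A)
    (hx : A ≤ x) (hx' : x ≤ 2 * A) (hy : A ≤ y) (hy' : y ≤ 2 * A) :
    2 * (2 ^ (-max (1 - a) 0) * A ^ (2 * a - 1)) * (x * y) ≤ (x * y) ^ a * (x + y) := by
  have hx0 : 0 < x := hA.trans_le hx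
  have hy0 : 0 < y := hA.trans_le hy
  have hconst : 2 ^ (-max (1 - a) 0) * A ^ (2 * a - 1)
      = A ^ a * (2 ^ (-max (1 - a) 0) * A ^ (a - 1)) := by
    rw [mul_left_comm, ← Real.rpow_add hA]
    ring_nf
  have hsplit : (x * y) ^ a * (x + y)
      = (x ^ a * y ^ (a - 1) + y ^ a * x ^ (a - 1)) * (x * y) := by
    rw [Real.mul_rpow hx0.le hy0.le, Real.rpow_sub_one hx0.ne', Real.rpow_sub_one hy0.ne']
    field_simp
  have hxa : A ^ a ≤ x ^ a := Real.rpow_le_rpow hA.le hx ha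
  have hya : A ^ a ≤ y ^ a := Real.rpow_le_rpow hA.le hy ha
  have hx1 := le_rpow_sub_one_of_le_of_le_two_mul (a := a) hA hx hx'
  have hy1 := le_rpow_sub_one_of_le_of_le_two_mul (a := a) hA hy hy'
  rw [hsplit, hconst, two_mul]
  gcongr

end KernelBound

theorem deltaMass_nonneg (K m n : ℕ) : 0 ≤ deltaMass K m n := by
  have hm : (0 : ℝ) ≤ m := m.cast_nonneg
  have hn : (0 : ℝ) ≤ n := n.cast_nonneg
  unfold deltaMass
  split_ifs <;> first | omega | linarith

theorem deltaMass_eq_add_of_lt {K m n : ℕ} (h : K ≤ m + n) (hm : m < K) (hn : n < K) :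
    deltaMass K m n = m + n := by
  simp [deltaMass, h, hm.not_ge, hn.not_ge]

theorem Finset.sum_sum_mul_sub_ite_eq {ι R : Type*} [DecidableEq ι] [NonUnitalNonAssocRing R]
    (s : Finset ι) (u v w : ι → R) :
    ∑ i ∈ s, ∑ j ∈ s, u i * (v j - if i = j then w j else 0)
      = (∑ i ∈ s, u i) * (∑ j ∈ s, v j) - ∑ i ∈ s, u i * w i := by
  simp only [mul_sub, sum_sub_distrib, mul_ite, mul_zero, sum_ite_eq, sum_mul_sum]
  exact congrArg _ (sum_congr rfl fun i hi => if_pos hi)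

theorem natCast_mul_sub_ite_nonneg (p q : ℕ) (P : Prop) [Decidable P] (hP : P → p = q) :
    0 ≤ (p : ℝ) * ((q : ℝ) - if P then 1 else 0) := by
  split_ifs with h
  · obtain rfl := hP h
    rcases p.eq_zero_or_pos with rfl | hp
    · simp
    · exact mul_nonneg (by positivity) (sub_nonneg.2 (Nat.one_le_cast.2 hp))
  · simp only [sub_zero]; positivity

theorem Finset.sum_Ico_sub_one_succ {M : Type*} [AddCommMonoid M] (h : ℕ → M) {p q : ℕ}
    (hp : 1 ≤ p) (hq : 1 ≤ q) :
    ∑ m ∈ Ico (p - 1) (q - 1), h (m + 1) = ∑ m ∈ Ico p q, h m := by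
  rw [sum_Ico_add', Nat.sub_add_cancel hp, Nat.sub_add_cancel hq]

theorem sum_mul_le_totalMass {L : ℕ → ℕ} (hL : (support L).Finite) (s : Finset ℕ) :
    ∑ m ∈ s, (m : ℝ) * L m ≤ totalMass L :=
  (summable_of_hasFiniteSupport <| hL.subset fun n hn h => hn (by simp [h])).sum_le_tsum s
    fun _ _ => by positivity

theorem dyadic_const_mul_two_pow_le {a : ℝ} (ha : 0 < a) (k : ℕ) :
    (2 : ℝ) ^ ((k : ℝ) * (2 * a - 1)) * 2 ^ (-max (1 - a) 0) * 2 ^ (k + 1)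
      ≤ 2 ^ (2 * a * ((k : ℝ) + 1)) := by
  rw [← Real.rpow_natCast, ← Real.rpow_add two_pos, ← Real.rpow_add two_pos]
  apply Real.rpow_le_rpow_of_exponent_le one_le_two
  push_cast
  linarith [le_max_left (1 - a) 0]

noncomputable def generatorTerm (a : ℝ) (K : ℕ) (L : ℕ → ℕ) (m n : ℕ) : ℝ :=
  ((m : ℝ) * n) ^ a * L m * ((L n : ℝ) - if m = n then 1 else 0) * deltaMass K m n

section GeneratorTerm

variable {a : ℝ} {K : ℕ} {L : ℕ → ℕ}

theorem generatorTerm_succ_succ (m n : ℕ) :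
    generatorTerm a K L (m + 1) (n + 1)
      = (((m : ℝ) + 1) * ((n : ℝ) + 1)) ^ a * (L (m + 1) : ℝ)
        * ((L (n + 1) : ℝ) - if m = n then 1 else 0) * deltaMass K (m + 1) (n + 1) := by
  simp [generatorTerm]

theorem generatorTerm_nonneg (m n : ℕ) : 0 ≤ generatorTerm a K L m n := by
  rw [generatorTerm, mul_assoc (_ ^ a)]
  exact mul_nonneg (mul_nonneg (by positivity) (natCast_mul_sub_ite_nonneg _ _ _ (congrArg L)))
    (deltaMass_nonneg K m n)

theorem summable_generatorTerm_succ (hL : (support L).Finite) (m : ℕ) :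
    Summable fun n => generatorTerm a K L (m + 1) (n + 1) := by
  refine summable_of_hasFiniteSupport <|
    ((hL.insert (m + 1)).preimage (add_left_injective 1).injOn).subset fun n hn => ?_
  by_contra h
  simp only [Set.mem_preimage, Set.mem_insert_iff, mem_support, not_or, not_not] at h
  obtain ⟨hne, hzero⟩ := h
  exact hn (by simp [generatorTerm, hzero, show m ≠ n by omega])

theorem summable_tsum_generatorTerm_succ (hL : (support L).Finite) :
    Summable fun m => ∑' n, generatorTerm a K L (m + 1) (n + 1) := by
  refine summable_of_hasFiniteSupport <|
    (hL.preimage (add_left_injective 1).injOn).subset fun m hm => ?_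
  by_contra h
  simp only [Set.mem_preimage, mem_support, not_not] at h
  exact hm (by simp [generatorTerm, h])

theorem sum_sum_le_tsum_tsum_generatorTerm_succ (hL : (support L).Finite) (s : Finset ℕ) :
    ∑ m ∈ s, ∑ n ∈ s, generatorTerm a K L (m + 1) (n + 1)
      ≤ ∑' m, ∑' n, generatorTerm a K L (m + 1) (n + 1) :=
  (sum_le_sum fun m _ => (summable_generatorTerm_succ hL m).sum_le_tsum s fun _ _ =>
    generatorTerm_nonneg _ _).trans <|
    (summable_tsum_generatorTerm_succ hL).sum_le_tsum s fun _ _ =>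
      tsum_nonneg fun _ => generatorTerm_nonneg _ _

end GeneratorTerm

section DyadicBlock

variable {a : ℝ} {k : ℕ}

theorem generatorTerm_ge_of_mem_Ico (ha : 0 ≤ a) (L : ℕ → ℕ) {m n : ℕ}
    (hm : m ∈ Ico (2 ^ k) (2 ^ (k + 1))) (hn : n ∈ Ico (2 ^ k) (2 ^ (k + 1))) :
    2 * ((2 : ℝ) ^ ((k : ℝ) * (2 * a - 1)) * 2 ^ (-max (1 - a) 0))
        * ((m : ℝ) * L m * ((n : ℝ) * L n - if m = n then (n : ℝ) else 0))
      ≤ generatorTerm a (2 ^ (k + 1)) L m n := by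
  rw [mem_Ico] at hm hn
  have hsucc : 2 ^ (k + 1) = 2 * 2 ^ k := pow_succ' 2 k
  have hA : (0 : ℝ) < 2 ^ k := by positivity
  have hkernel := two_mul_mul_le_rpow_mul_add ha hA
    (x := m) (y := n) (by exact_mod_cast hm.1) (by exact_mod_cast (by omega : m ≤ 2 * 2 ^ k))
    (by exact_mod_cast hn.1) (by exact_mod_cast (by omega : n ≤ 2 * 2 ^ k))
  rw [← Real.rpow_natCast_mul zero_le_two, mul_comm (2 ^ (-_))] at hkernel
  have hL := natCast_mul_sub_ite_nonneg (L m) (L n) (m = n) (congrArg L)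
  rw [generatorTerm, deltaMass_eq_add_of_lt (by omega) hm.2 hn.2]
  calc 2 * ((2 : ℝ) ^ ((k : ℝ) * (2 * a - 1)) * 2 ^ (-max (1 - a) 0))
        * ((m : ℝ) * L m * ((n : ℝ) * L n - if m = n then (n : ℝ) else 0))
      = 2 * ((2 : ℝ) ^ ((k : ℝ) * (2 * a - 1)) * 2 ^ (-max (1 - a) 0)) * (m * n)
        * (L m * ((L n : ℝ) - if m = n then 1 else 0)) := by
        split_ifs <;> ring
    _ ≤ (m * n) ^ a * (m + n) * (L m * ((L n : ℝ) - if m = n then 1 else 0)) := by gcongr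
    _ = _ := by ring

theorem sum_sum_generatorTerm_Ico_ge (ha : 0 ≤ a) (L : ℕ → ℕ) :
    2 * ((2 : ℝ) ^ ((k : ℝ) * (2 * a - 1)) * 2 ^ (-max (1 - a) 0))
        * ((∑ m ∈ Ico (2 ^ k : ℕ) (2 ^ (k + 1)), (m : ℝ) * L m) ^ 2
          - 2 ^ (k + 1) * ∑ m ∈ Ico (2 ^ k : ℕ) (2 ^ (k + 1)), (m : ℝ) * L m)
      ≤ ∑ m ∈ Ico (2 ^ k) (2 ^ (k + 1)), ∑ n ∈ Ico (2 ^ k) (2 ^ (k + 1)),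
          generatorTerm a (2 ^ (k + 1)) L m n := by
  set B := Ico (2 ^ k : ℕ) (2 ^ (k + 1))
  set c := (2 : ℝ) ^ ((k : ℝ) * (2 * a - 1)) * 2 ^ (-max (1 - a) 0)
  have hdiag : ∑ m ∈ B, (m : ℝ) * L m * m ≤ 2 ^ (k + 1) * ∑ m ∈ B, (m : ℝ) * L m := by
    rw [mul_sum]
    refine sum_le_sum fun m hm => ?_
    rw [mul_comm (2 ^ (k + 1) : ℝ)]
    gcongr
    exact_mod_cast (mem_Ico.1 hm).2.le
  calc 2 * c * ((∑ m ∈ B, (m : ℝ) * L m) ^ 2 - 2 ^ (k + 1) * ∑ m ∈ B, (m : ℝ) * L m)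
      ≤ 2 * c * ((∑ m ∈ B, (m : ℝ) * L m) * (∑ m ∈ B, (m : ℝ) * L m)
          - ∑ m ∈ B, (m : ℝ) * L m * m) := by
        rw [sq]; gcongr
    _ = ∑ m ∈ B, ∑ n ∈ B,
          2 * c * ((m : ℝ) * L m * ((n : ℝ) * L n - if m = n then (n : ℝ) else 0)) := by
        rw [← sum_sum_mul_sub_ite_eq]; simp_rw [mul_sum]
    _ ≤ _ := sum_le_sum fun m hm => sum_le_sum fun n hn =>
        generatorTerm_ge_of_mem_Ico ha L hm hn

end DyadicBlock

/-- Generator lower bound for the kernel `(mn)^a`: if the dyadic block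
`2^k ≤ m ≤ 2^{k+1}−1` carries a fraction at least `ε` of the mass, then the action
of the Marcus–Lushnikov generator on the tail mass above `2^{k+1}` is at least
`2^{k(2a−1)} 2^{−(1−a)⁺} ε² − 2^{2a(k+1)}/N`. -/
theorem generator_dyadic_tail_lower_bound
    (a : ℝ) (ha : 0 < a) (k : ℕ) (ε : ℝ) (hε : 0 ≤ ε)
    (L : ℕ → ℕ) (hLfin : (Function.support L).Finite)
    (hN : 1 ≤ totalMass L)
    (hblock : ε ≤ (totalMass L)⁻¹ *
      ∑ m ∈ Finset.Ico (2 ^ k : ℕ) (2 ^ (k + 1) : ℕ), (m : ℝ) * (L m : ℝ)) :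
    (2 : ℝ) ^ ((k : ℝ) * (2 * a - 1)) * (2 : ℝ) ^ (-(max (1 - a) 0)) * ε ^ 2
        - (2 : ℝ) ^ (2 * a * ((k : ℝ) + 1)) / totalMass L
      ≤ (1 / (2 * totalMass L ^ 2)) *
          ∑' (m : ℕ) (n : ℕ),
            (((m : ℝ) + 1) * ((n : ℝ) + 1)) ^ a * (L (m + 1) : ℝ)
              * ((L (n + 1) : ℝ) - if m = n then 1 else 0)
              * deltaMass (2 ^ (k + 1)) (m + 1) (n + 1) := by
  simp only [← generatorTerm_succ_succ]
  set N := totalMass L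
  set M := ∑ m ∈ Ico (2 ^ k : ℕ) (2 ^ (k + 1)), (m : ℝ) * L m
  set c := (2 : ℝ) ^ ((k : ℝ) * (2 * a - 1)) * 2 ^ (-max (1 - a) 0)
  set E := (2 : ℝ) ^ (2 * a * ((k : ℝ) + 1))
  have hN0 : 0 < N := one_pos.trans_le hN
  have hεM : N * ε ≤ M := (le_inv_mul_iff₀ hN0).1 hblock
  have hMN : M ≤ N := sum_mul_le_totalMass hLfin _
  have hcE : c * 2 ^ (k + 1) ≤ E := dyadic_const_mul_two_pow_le ha k
  have hgen : 2 * c * (M ^ 2 - 2 ^ (k + 1) * M)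
      ≤ ∑' m, ∑' n, generatorTerm a (2 ^ (k + 1)) L (m + 1) (n + 1) := by
    refine (sum_sum_generatorTerm_Ico_ge ha.le L).trans ?_
    simp only [← sum_Ico_sub_one_succ _ Nat.one_le_two_pow Nat.one_le_two_pow]
    exact sum_sum_le_tsum_tsum_generatorTerm_succ hLfin _
  have hc : 0 ≤ c := by positivity
  have hE : 0 ≤ E := by positivity
  have hsq : (N * ε) ^ 2 ≤ M ^ 2 := pow_le_pow_left₀ (by positivity) hεM 2
  calc c * ε ^ 2 - E / N = 1 / (2 * N ^ 2) * (2 * c * (N * ε) ^ 2 - 2 * E * N) := by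
        field_simp
    _ ≤ _ := by
        gcongr
        linarith [mul_le_mul_of_nonneg_left hsq hc, mul_le_mul_of_nonneg_right hcE
          (hεM.trans' (by positivity) : 0 ≤ M), mul_le_mul_of_nonneg_left hMN hE]
end

section
/- Let q > 1 be real, let k ≥ 1 be an integer, and let L : ℕ → ℕ be a finitely supported function with total mass N = ∑_{n≥1} n·L_n ≥ 1 such that L_n = 0 for every n with 2n > N (no particle exceeds half the total mass). Then (1/(2N))·∑_{m≥1} ∑_{n≥1} (m^q·n + n^q·m)·L_m·(L_n − 1[m=n]) ≥ (1/4)·∑_{n≥k} n^q·L_n. -/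
/-!
With `A = ∑ m^q L_m` and `N = ∑ m L_m`, the double sum expands to `2AN - 2 ∑ m^q · m · L_m`.
Every occupied size satisfies `2m ≤ N`, so the diagonal term is at most `AN`, and the double sum
is at least `AN`. Dividing by `2N` gives `A / 2`, which dominates a quarter of the tail
`∑_{n ≥ k} n^q L_n ≤ A`.
-/

open Finset

section
variable {ι : Type*} [DecidableEq ι] (s : Finset ι) (u v w : ι → ℝ)

theorem sum_sum_symm_mul_sub_diag :
    ∑ m ∈ s, ∑ n ∈ s, (u m * v n + u n * v m) * w m * (w n - if m = n then 1 else 0)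
      = 2 * ((∑ m ∈ s, u m * w m) * ∑ m ∈ s, v m * w m) - 2 * ∑ m ∈ s, u m * v m * w m := by
  have hsplit : ∀ m n, (u m * v n + u n * v m) * w m * (w n - if m = n then 1 else 0)
      = u m * w m * (v n * w n) + v m * w m * (u n * w n)
        - if m = n then 2 * (u m * v m * w m) else 0 := by
    intro m n
    split_ifs with h
    · subst h; ring
    · ring
  simp only [hsplit, sum_sub_distrib, sum_add_distrib, sum_ite_eq, sum_ite_mem, inter_self,
    ← mul_sum, ← sum_mul]
  ring

variable {s u v w}

theorem sum_mul_sum_le_sum_sum_symm_mul_sub_diag (hu : ∀ m ∈ s, 0 ≤ u m)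
    (hw : ∀ m ∈ s, 0 ≤ w m) (hv : ∀ m ∈ s, w m ≠ 0 → 2 * v m ≤ ∑ n ∈ s, v n * w n) :
    (∑ m ∈ s, u m * w m) * ∑ m ∈ s, v m * w m
      ≤ ∑ m ∈ s, ∑ n ∈ s, (u m * v n + u n * v m) * w m * (w n - if m = n then 1 else 0) := by
  have hdiag : 2 * ∑ m ∈ s, u m * v m * w m ≤ (∑ m ∈ s, u m * w m) * ∑ m ∈ s, v m * w m := by
    rw [mul_sum, sum_mul]
    refine sum_le_sum fun m hm => ?_
    rcases eq_or_ne (w m) 0 with h | h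
    · simp [h]
    · have := mul_le_mul_of_nonneg_left (hv m hm h) (mul_nonneg (hu m hm) (hw m hm))
      linarith
  rw [sum_sum_symm_mul_sub_diag]
  linarith

end

theorem tsum_eq_sum_range_of_forall_le {α : Type*} [AddCommMonoid α] [TopologicalSpace α]
    {f : ℕ → α} {M : ℕ} (hf : ∀ n, M ≤ n → f n = 0) : ∑' n, f n = ∑ n ∈ range M, f n :=
  tsum_eq_sum fun n hn => hf n (by simpa using hn)

theorem tsum_tsum_eq_sum_range_of_forall_le {α : Type*} [AddCommMonoid α] [TopologicalSpace α]
    {f : ℕ → ℕ → α} {M : ℕ} (hf : ∀ m n, M ≤ m ∨ M ≤ n → f m n = 0) :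
    ∑' (m : ℕ) (n : ℕ), f m n = ∑ m ∈ range M, ∑ n ∈ range M, f m n := by
  rw [tsum_congr fun m => tsum_eq_sum_range_of_forall_le fun n hn => hf m n (.inr hn)]
  exact tsum_eq_sum_range_of_forall_le fun m hm => sum_eq_zero fun n _ => hf m n (.inl hm)

theorem Summable.tsum_nat_add_le_of_le {f : ℕ → ℝ} (hf : Summable f) (hf0 : ∀ n, 0 ≤ f n)
    {j k : ℕ} (hjk : j ≤ k) : ∑' n, f (n + k) ≤ ∑' n, f (n + j) := by
  obtain ⟨d, rfl⟩ := Nat.exists_eq_add_of_le hjk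
  simpa only [Function.comp_def, add_comm j d, add_assoc] using
    tsum_comp_le_tsum_of_inj ((summable_nat_add_iff j).2 hf) (fun n => hf0 _) (add_left_injective d)

section
variable {L : ℕ → ℕ} {M : ℕ}

theorem totalMass_eq_sum_range (hM : ∀ n, M < n → L n = 0) :
    totalMass L = ∑ m ∈ range M, ((m : ℝ) + 1) * L (m + 1) := by
  rw [totalMass, tsum_eq_sum_range_of_forall_le (M := M + 1) fun n hn => by simp [hM n hn],
    sum_range_succ']
  push_cast
  simp

theorem tsum_rpow_mul_nat_add_le (q : ℝ) {k : ℕ} (hk : 1 ≤ k) (hM : ∀ n, M < n → L n = 0) :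
    ∑' n : ℕ, ((n : ℝ) + k) ^ q * L (n + k) ≤ ∑ m ∈ range M, ((m : ℝ) + 1) ^ q * L (m + 1) := by
  set F : ℕ → ℝ := fun n => (n : ℝ) ^ q * L n
  have hF : Summable F := summable_of_ne_finset_zero (s := range (M + 1)) fun n hn => by
    simp [F, hM n (by simpa using hn)]
  calc ∑' n : ℕ, ((n : ℝ) + k) ^ q * L (n + k) = ∑' n, F (n + k) := by simp [F]
    _ ≤ ∑' n, F (n + 1) := hF.tsum_nat_add_le_of_le (fun n => by positivity) hk
    _ = _ := by
      rw [tsum_eq_sum_range_of_forall_le (M := M) fun n hn => by simp [F, hM (n + 1) (by omega)]]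
      simp [F]

theorem sum_rpow_mul_mul_totalMass_le (q : ℝ) (hM : ∀ n, M < n → L n = 0)
    (hhalf : ∀ n : ℕ, totalMass L < 2 * (n : ℝ) → L n = 0) :
    (∑ m ∈ range M, ((m : ℝ) + 1) ^ q * L (m + 1)) * totalMass L ≤ ∑' (m : ℕ) (n : ℕ),
      (((m : ℝ) + 1) ^ q * ((n : ℝ) + 1) + ((n : ℝ) + 1) ^ q * ((m : ℝ) + 1))
        * (L (m + 1) : ℝ) * ((L (n + 1) : ℝ) - if m = n then 1 else 0) := by
  rw [tsum_tsum_eq_sum_range_of_forall_le (M := M)]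
  · conv_lhs => rw [totalMass_eq_sum_range hM]
    refine sum_mul_sum_le_sum_sum_symm_mul_sub_diag (fun m _ => by positivity)
      (fun m _ => by positivity) fun m _ hm => ?_
    rw [← totalMass_eq_sum_range hM]
    by_contra! h
    exact hm (by exact_mod_cast hhalf (m + 1) (by push_cast; exact h))
  · rintro m n (h | h)
    · simp [hM (m + 1) (by omega)]
    · rcases eq_or_ne m n with rfl | hmn
      · simp [hM (m + 1) (by omega)]
      · simp [hmn, hM (n + 1) (by omega)]

end

theorem particle_number_decrease_lower_bound_general
    (q : ℝ) (k : ℕ) (hk : 1 ≤ k)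
    (L : ℕ → ℕ) (hLfin : (Function.support L).Finite)
    (hN : 1 ≤ totalMass L)
    (hhalf : ∀ n : ℕ, totalMass L < 2 * (n : ℝ) → L n = 0) :
    (1 / 4) * ∑' n : ℕ, ((n : ℝ) + (k : ℝ)) ^ q * (L (n + k) : ℝ)
      ≤ (1 / (2 * totalMass L)) *
          ∑' (m : ℕ) (n : ℕ),
            (((m : ℝ) + 1) ^ q * ((n : ℝ) + 1) + ((n : ℝ) + 1) ^ q * ((m : ℝ) + 1))
              * (L (m + 1) : ℝ)
              * ((L (n + 1) : ℝ) - if m = n then 1 else 0) := by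
  obtain ⟨M, hM⟩ : ∃ M, ∀ n, M < n → L n = 0 := by
    obtain ⟨M, hM⟩ := hLfin.bddAbove
    exact ⟨M, fun n hn => by_contra fun h => (hM h).not_gt hn⟩
  set A := ∑ m ∈ range M, ((m : ℝ) + 1) ^ q * L (m + 1)
  have hA : 0 ≤ A := sum_nonneg fun m _ => by positivity
  have hAN := sum_rpow_mul_mul_totalMass_le q hM hhalf
  have hN0 : 0 < totalMass L := by linarith
  calc (1 / 4) * ∑' n : ℕ, ((n : ℝ) + (k : ℝ)) ^ q * (L (n + k) : ℝ)
      ≤ (1 / 4) * A := by gcongr; exact tsum_rpow_mul_nat_add_le q hk hM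
    _ ≤ 1 / (2 * totalMass L) * (A * totalMass L) := by field_simp; linarith
    _ ≤ _ := by gcongr

/-- Rate of decrease of the particle number: if `q > 1`, `k ≥ 1`, the configuration
`L` has total mass `N ≥ 1` and no particle exceeds half the total mass, then
`(1/(2N)) ∑_{m,n ≥ 1} (m^q n + n^q m) L_m (L_n − 1[m=n]) ≥ (1/4) ∑_{n ≥ k} n^q L_n`. -/
theorem particle_number_decrease_lower_bound
    (q : ℝ) (hq : 1 < q) (k : ℕ) (hk : 1 ≤ k)
    (L : ℕ → ℕ) (hLfin : (Function.support L).Finite)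
    (hN : 1 ≤ totalMass L)
    (hhalf : ∀ n : ℕ, totalMass L < 2 * (n : ℝ) → L n = 0) :
    (1 / 4) * ∑' n : ℕ, ((n : ℝ) + (k : ℝ)) ^ q * (L (n + k) : ℝ)
      ≤ (1 / (2 * totalMass L)) *
          ∑' (m : ℕ) (n : ℕ),
            (((m : ℝ) + 1) ^ q * ((n : ℝ) + 1) + ((n : ℝ) + 1) ^ q * ((m : ℝ) + 1))
              * (L (m + 1) : ℝ)
              * ((L (n + 1) : ℝ) - if m = n then 1 else 0) :=
  particle_number_decrease_lower_bound_general q k hk L hLfin hN hhalf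
end

section
/- Let a > 0 be real and let k, ℓ be integers with 2 ≤ k < ℓ. Assume that the function r ↦ e^{−(r+1)a}·log r is nonincreasing on [k, ∞). Then ∑_{r=k}^{ℓ−1} e^{(k−r−1)a}·log r ≤ a^{−1}·log k + a^{−1}·e^{ka}·( max(log(1/(a·k)), 0) + c₂ ), where c₂ = ∫₁^∞ e^{−r}·r^{−1} dr. -/
/-!
Write the summand as `e^{ka} f(r)` with `f(r) = e^{-(r+1)a} log r`. Since `f` is antitone, the sum
is at most `e^{ka} (f(k) + ∫_k^{ℓ-1} f)`. Integrating by parts,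
`∫_k^N e^{-at} log t ≤ a⁻¹ e^{-ak} log k + a⁻¹ ∫_{ak}^{aN} e^{-u} u⁻¹ du`, and the last integral is
at most `log⁺ (1/(ak)) + ∫_1^∞ e^{-u} u⁻¹ du` because `e^{-u} u⁻¹ ≤ u⁻¹` on `[ak, 1]`.
The two `log k` terms combine via `e^{-a} (1 + a⁻¹) ≤ a⁻¹`, i.e. `1 + a ≤ e^a`.
-/

open MeasureTheory Set Real

theorem AntitoneOn.sum_Icc_le_add_integral {f : ℝ → ℝ} {m n : ℕ} (hmn : m ≤ n)
    (hf : AntitoneOn f (Icc (m : ℝ) n)) :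
    ∑ i ∈ Finset.Icc m n, f i ≤ f m + ∫ x in (m : ℝ)..n, f x := by
  have h := hf.sum_le_integral_Ico hmn
  rw [Finset.sum_Ico_add' (fun i : ℕ => f i), Finset.Ico_add_one_add_one_eq_Ioc] at h
  rw [← Finset.add_sum_Ioc_eq_sum_Icc hmn]
  gcongr

lemma integrableOn_exp_neg_mul_inv_Ioi {c : ℝ} (hc : 0 < c) :
    IntegrableOn (fun u : ℝ => exp (-u) * u⁻¹) (Ioi c) := by
  refine ((integrableOn_exp_neg_Ioi c).mul_const c⁻¹).mono' (by fun_prop) ?_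
  filter_upwards [ae_restrict_mem measurableSet_Ioi] with u (hu : c < u)
  have := hc.trans hu
  rw [norm_of_nonneg (by positivity)]
  gcongr

lemma integral_exp_neg_mul_inv_le_max_log {x : ℝ} (hx : 0 < x) :
    ∫ u in x..1, exp (-u) * u⁻¹ ≤ max (log (1 / x)) 0 := by
  rcases le_total x 1 with hx1 | hx1
  · have hpos : ∀ u ∈ uIcc x 1, 0 < u := fun u hu => hx.trans_le (by simpa [hx1] using hu.1)
    calc ∫ u in x..1, exp (-u) * u⁻¹ ≤ ∫ u in x..1, u⁻¹ := by
          refine intervalIntegral.integral_mono_on hx1 ?_ ?_ fun u hu => ?_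
          · exact ContinuousOn.intervalIntegrable <|
              (continuous_exp.comp continuous_neg).continuousOn.mul
                (continuousOn_inv₀.mono fun u hu => (hpos u hu).ne')
          · exact intervalIntegral.intervalIntegrable_inv (fun u hu => (hpos u hu).ne')
              continuousOn_id
          · have := hx.trans_le hu.1
            exact mul_le_of_le_one_left (by positivity) (exp_le_one_iff.2 (by linarith))
      _ = log (1 / x) := integral_inv_of_pos hx one_pos
      _ ≤ _ := le_max_left _ _
  · rw [intervalIntegral.integral_symm]
    refine (neg_nonpos.2 (intervalIntegral.integral_nonneg hx1 fun u hu => ?_)).trans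
      (le_max_right _ _)
    have : 0 < u := one_pos.trans_le hu.1
    positivity

lemma integral_exp_neg_mul_inv_le {x y : ℝ} (hx : 0 < x) (hy : 0 < y) :
    ∫ u in x..y, exp (-u) * u⁻¹
      ≤ max (log (1 / x)) 0 + ∫ u in Ioi 1, exp (-u) * u⁻¹ := by
  have hint := fun c (hc : (0 : ℝ) < c) => integrableOn_exp_neg_mul_inv_Ioi hc
  have htail : 0 ≤ ∫ u in Ioi y, exp (-u) * u⁻¹ :=
    setIntegral_nonneg measurableSet_Ioi fun u (hu : y < u) => by
      have := hy.trans hu; positivity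
  calc ∫ u in x..y, exp (-u) * u⁻¹
      ≤ (∫ u in x..y, exp (-u) * u⁻¹) + ∫ u in Ioi y, exp (-u) * u⁻¹ :=
        le_add_of_nonneg_right htail
    _ = (∫ u in x..1, exp (-u) * u⁻¹) + ∫ u in Ioi 1, exp (-u) * u⁻¹ := by
      rw [intervalIntegral.integral_interval_add_Ioi (hint x hx) (hint y hy),
        intervalIntegral.integral_interval_add_Ioi (hint x hx) (hint 1 one_pos)]
    _ ≤ _ := by gcongr; exact integral_exp_neg_mul_inv_le_max_log hx

-- `dt / t` is invariant under `t ↦ a t`.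
lemma integral_exp_neg_mul_mul_inv {a : ℝ} (ha : a ≠ 0) (c d : ℝ) :
    ∫ t in c..d, exp (-(a * t)) * t⁻¹ = ∫ u in a * c..a * d, exp (-u) * u⁻¹ := by
  have h := intervalIntegral.integral_comp_mul_left (fun u => exp (-u) * u⁻¹) ha (a := c) (b := d)
  simp only [mul_inv, smul_eq_mul, mul_left_comm _ a⁻¹, intervalIntegral.integral_const_mul] at h
  exact mul_left_cancel₀ (inv_ne_zero ha) h

lemma hasDerivAt_neg_inv_mul_exp_neg_mul {a : ℝ} (ha : a ≠ 0) (t : ℝ) :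
    HasDerivAt (fun t => -a⁻¹ * exp (-(a * t))) (exp (-(a * t))) t := by
  have h : HasDerivAt (fun t => -(a * t)) (-a) t := by
    simpa using ((hasDerivAt_id t).const_mul a).fun_neg
  exact (h.exp.const_mul (-a⁻¹)).congr_deriv (by field_simp)

lemma integral_exp_neg_mul_mul_log {a c d : ℝ} (ha : a ≠ 0) (hc : 0 < c) (hd : 0 < d) :
    ∫ t in c..d, exp (-(a * t)) * log t
      = a⁻¹ * (exp (-(a * c)) * log c - exp (-(a * d)) * log d)
        + a⁻¹ * ∫ u in a * c..a * d, exp (-u) * u⁻¹ := by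
  have hpos : ∀ t ∈ uIcc c d, 0 < t := fun t ht => (lt_min hc hd).trans_le ht.1
  have h := intervalIntegral.integral_mul_deriv_eq_deriv_mul
    (fun t ht => hasDerivAt_log (hpos t ht).ne')
    (fun t _ => hasDerivAt_neg_inv_mul_exp_neg_mul ha t)
    (intervalIntegral.intervalIntegrable_inv (fun t ht => (hpos t ht).ne') continuousOn_id)
    (by apply Continuous.intervalIntegrable; fun_prop)
  simp only [mul_comm (log _), mul_left_comm _ (-a⁻¹), mul_comm _⁻¹ (exp _),
    intervalIntegral.integral_const_mul, integral_exp_neg_mul_mul_inv ha] at h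
  rw [h]
  ring

lemma integral_exp_neg_mul_mul_log_le {a c d : ℝ} (ha : 0 < a) (hc : 0 < c) (hd : 1 ≤ d) :
    ∫ t in c..d, exp (-(a * t)) * log t
      ≤ a⁻¹ * exp (-(a * c)) * log c
        + a⁻¹ * (max (log (1 / (a * c))) 0 + ∫ u in Ioi 1, exp (-u) * u⁻¹) := by
  have hd₀ : 0 < d := one_pos.trans_le hd
  rw [integral_exp_neg_mul_mul_log ha.ne' hc hd₀]
  calc _ ≤ a⁻¹ * (exp (-(a * c)) * log c - 0)
        + a⁻¹ * (max (log (1 / (a * c))) 0 + ∫ u in Ioi 1, exp (-u) * u⁻¹) := by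
        gcongr
        · exact mul_nonneg (exp_pos _).le (log_nonneg hd)
        · exact integral_exp_neg_mul_inv_le (mul_pos ha hc) (mul_pos ha hd₀)
    _ = _ := by ring

lemma integral_exp_neg_add_one_mul_mul_log_le {a c d : ℝ} (ha : 0 < a) (hc : 0 < c)
    (hd : 1 ≤ d) :
    ∫ t in c..d, exp (-(t + 1) * a) * log t
      ≤ exp (-a) * (a⁻¹ * exp (-(a * c)) * log c
        + a⁻¹ * (max (log (1 / (a * c))) 0 + ∫ u in Ioi 1, exp (-u) * u⁻¹)) := by
  have hsplit : ∀ t, exp (-(t + 1) * a) * log t = exp (-a) * (exp (-(a * t)) * log t) :=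
    fun t => by rw [← mul_assoc, ← exp_add]; ring_nf
  simp only [hsplit, intervalIntegral.integral_const_mul]
  gcongr
  exact integral_exp_neg_mul_mul_log_le ha hc hd

lemma exp_neg_mul_one_add_inv_le_inv {a : ℝ} (ha : 0 < a) : exp (-a) * (1 + a⁻¹) ≤ a⁻¹ := by
  calc exp (-a) * (1 + a⁻¹) = exp (-a) * ((a + 1) * a⁻¹) := by field_simp
    _ ≤ exp (-a) * (exp a * a⁻¹) := by gcongr; exact add_one_le_exp a
    _ = a⁻¹ := by rw [← mul_assoc, ← exp_add, neg_add_cancel, exp_zero, one_mul]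

/-- Integral-comparison bound for the geometrically weighted logarithmic sum: for
`a > 0` and integers `2 ≤ k < ℓ`, if `r ↦ e^{−(r+1)a} log r` is nonincreasing on
`[k, ∞)`, then `∑_{r=k}^{ℓ−1} e^{(k−r−1)a} log r
  ≤ a^{−1} log k + a^{−1} e^{ka} (log⁺(1/(ak)) + ∫₁^∞ e^{−r} r^{−1} dr)`. -/
theorem weighted_log_sum_bound
    (a : ℝ) (ha : 0 < a) (k ℓ : ℕ) (hk : 2 ≤ k) (hkl : k < ℓ)
    (hmono : AntitoneOn (fun r : ℝ => Real.exp (-(r + 1) * a) * Real.log r)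
      (Set.Ici (k : ℝ))) :
    ∑ r ∈ Finset.Icc k (ℓ - 1), Real.exp (((k : ℝ) - (r : ℝ) - 1) * a) * Real.log r
      ≤ a⁻¹ * Real.log k + a⁻¹ * Real.exp ((k : ℝ) * a)
          * (max (Real.log (1 / (a * (k : ℝ)))) 0
              + ∫ r in Set.Ioi (1 : ℝ), Real.exp (-r) * r⁻¹) := by
  set M := max (log (1 / (a * k))) 0 + ∫ r in Ioi (1 : ℝ), exp (-r) * r⁻¹
  have hk₁ : (1 : ℝ) ≤ k := by exact_mod_cast (by omega : 1 ≤ k)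
  have hkℓ : k ≤ ℓ - 1 := by omega
  have hM : 0 ≤ M := add_nonneg (le_max_right _ _) <|
    setIntegral_nonneg measurableSet_Ioi fun r (hr : 1 < r) => by
      have := one_pos.trans hr; positivity
  have hsum := (hmono.mono Icc_subset_Ici_self).sum_Icc_le_add_integral hkℓ
  have hint := integral_exp_neg_add_one_mul_mul_log_le ha (one_pos.trans_le hk₁)
    (hk₁.trans (by exact_mod_cast hkℓ) : (1 : ℝ) ≤ (ℓ - 1 : ℕ))
  have hexp₁ : exp (k * a) * exp (-(k + 1) * a) = exp (-a) := by rw [← exp_add]; ring_nf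
  have hexp₂ : exp (k * a) * exp (-(a * k)) = 1 := by rw [← exp_add]; ring_nf; exact exp_zero
  calc ∑ r ∈ Finset.Icc k (ℓ - 1), exp ((k - r - 1) * a) * log r
      = exp (k * a) * ∑ r ∈ Finset.Icc k (ℓ - 1), exp (-(r + 1) * a) * log r := by
        rw [Finset.mul_sum]
        refine Finset.sum_congr rfl fun r _ => ?_
        rw [← mul_assoc, ← exp_add]
        ring_nf
    _ ≤ exp (k * a) * (exp (-(k + 1) * a) * log k
          + exp (-a) * (a⁻¹ * exp (-(a * k)) * log k + a⁻¹ * M)) := by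
        gcongr
        exact hsum.trans (add_le_add_right hint _)
    _ = exp (-a) * (1 + a⁻¹) * log k + exp (-a) * (a⁻¹ * exp (k * a) * M) := by
        linear_combination (log k) * hexp₁ + exp (-a) * a⁻¹ * log k * hexp₂
    _ ≤ a⁻¹ * log k + a⁻¹ * exp (k * a) * M := by
        refine add_le_add ?_ ?_
        · exact mul_le_mul_of_nonneg_right (exp_neg_mul_one_add_inv_le_inv ha) (log_nonneg hk₁)
        · exact mul_le_of_le_one_left (by positivity) (exp_le_one_iff.2 (by linarith))
end

section
/- Let q ∈ (1,2), s > 0, η ∈ (0, (q−1)/2), and let γ satisfy 0 < γ < s·(1 − 2η/(q−1)). Then there exists k₀ (depending only on q, s, η, γ) such that for every integer k ≥ k₀ the following holds: set β = (q−1)/(2s(k−1)) and define the sequence (m_ℓ)_{ℓ ≥ k} by m_k = k^{s(k−1)} and m_{ℓ+1} = m_ℓ^{1+β}·ℓ^{−η} for ℓ ≥ k; then for every integer ℓ ≥ k, log m_ℓ ≥ γ·(β+1)^{ℓ−k}·k·log k. -/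
/-!
Taking logarithms turns the recursion into the linear one `L_{ℓ+1} = (1+β) L_ℓ - η log ℓ`.
Its solution stays above `γ k log k (1+β)^{ℓ-k} + (η/β) log ℓ + η/(β² k)`: multiplying by
`1+β` creates an extra `η log ℓ + η/(βk)`, which pays both for the loss `η log ℓ` and for the
increment `(η/β)(log(ℓ+1) - log ℓ) ≤ η/(βk)`. Since `η/β ≈ 2sηk/(q-1)` and `η/(β²k) = O(k)`,
the bound holds at `ℓ = k` as soon as `(s(1 - 2η/(q-1)) - γ) k log k` dominates `O(k)`.
-/

open Real Filter

theorem Real.log_add_one_sub_log_le {x : ℝ} (hx : 0 < x) : log (x + 1) - log x ≤ x⁻¹ := by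
  calc log (x + 1) - log x = log ((x + 1) / x) := (log_div (by positivity) hx.ne').symm
    _ ≤ (x + 1) / x - 1 := log_le_sub_one_of_pos (by positivity)
    _ = x⁻¹ := by field_simp; ring

section LogRecurrence

variable {L : ℕ → ℝ} {b η A : ℝ} {k : ℕ}

theorem le_of_log_recurrence (hb : 0 < b) (hη : 0 ≤ η) (hk : 0 < k)
    (hrec : ∀ n, k ≤ n → (1 + b) * L n - η * log n ≤ L (n + 1))
    (hbase : A + η / b * log k + η / (b ^ 2 * k) ≤ L k) :
    ∀ ℓ, k ≤ ℓ → A * (b + 1) ^ (ℓ - k) + η / b * log ℓ + η / (b ^ 2 * k) ≤ L ℓ := by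
  intro ℓ hℓ
  induction ℓ, hℓ using Nat.le_induction with
  | base => simpa using hbase
  | succ n hn ih =>
    have hkn : (k : ℝ) ≤ n := by exact_mod_cast hn
    have hk0 : (0 : ℝ) < k := by exact_mod_cast hk
    have hlog : log (n + 1) - log n ≤ (k : ℝ)⁻¹ :=
      (log_add_one_sub_log_le (hk0.trans_le hkn)).trans (inv_anti₀ hk0 hkn)
    have hslack : η / b * (log (n + 1) - log n) ≤ b * (η / (b ^ 2 * k)) := by
      calc η / b * (log (n + 1) - log n) ≤ η / b * (k : ℝ)⁻¹ := by gcongr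
        _ = b * (η / (b ^ 2 * k)) := by field_simp
    have hgrow := mul_le_mul_of_nonneg_left ih (by linarith : 0 ≤ 1 + b)
    have hexpand : (1 + b) * (A * (b + 1) ^ (n - k) + η / b * log n + η / (b ^ 2 * k)) =
        A * ((b + 1) ^ (n - k) * (b + 1)) + η / b * log n + η * log n
          + η / (b ^ 2 * k) + b * (η / (b ^ 2 * k)) := by
      field_simp
      ring
    rw [Nat.sub_add_comm hn, pow_succ]
    push_cast
    linarith [hrec n hn]

end LogRecurrence

section RpowRecurrence

variable {m : ℕ → ℝ} {b η : ℝ} {k : ℕ}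

theorem pos_of_rpow_recurrence (hk : 0 < k) (hm : 0 < m k)
    (hrec : ∀ n, k ≤ n → m (n + 1) = m n ^ (1 + b) * (n : ℝ) ^ (-η)) :
    ∀ n, k ≤ n → 0 < m n := by
  intro n hn
  induction n, hn using Nat.le_induction with
  | base => exact hm
  | succ n hn ih =>
    rw [hrec n hn]
    exact mul_pos (rpow_pos_of_pos ih _) (rpow_pos_of_pos (by exact_mod_cast hk.trans_le hn) _)

theorem log_rpow_recurrence (hk : 0 < k) (hm : 0 < m k)
    (hrec : ∀ n, k ≤ n → m (n + 1) = m n ^ (1 + b) * (n : ℝ) ^ (-η)) (n : ℕ) (hn : k ≤ n) :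
    log (m (n + 1)) = (1 + b) * log (m n) - η * log n := by
  have hmn := pos_of_rpow_recurrence hk hm hrec n hn
  have hn0 : (0 : ℝ) < n := by exact_mod_cast hk.trans_le hn
  rw [hrec n hn, log_mul (by positivity) (by positivity), log_rpow hmn, log_rpow hn0]
  ring

end RpowRecurrence

theorem eventually_initial_bound {q s η γ : ℝ} (hq : 1 < q) (hs : 0 < s) (hη : 0 ≤ η)
    (hγ : γ < s * (1 - 2 * η / (q - 1))) :
    ∀ᶠ k : ℕ in atTop, γ * k * log k + η / ((q - 1) / (2 * s * ((k : ℝ) - 1))) * log k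
      + η / (((q - 1) / (2 * s * ((k : ℝ) - 1))) ^ 2 * k) ≤ s * ((k : ℝ) - 1) * log k := by
  set s' := s * (1 - 2 * η / (q - 1))
  set δ := s' - γ
  set C := 4 * s ^ 2 * η / (q - 1) ^ 2
  have hδ : 0 < δ := sub_pos.mpr hγ
  have hC : 0 ≤ C := by positivity
  have hlin : ∀ᶠ k : ℕ in atTop, s' ≤ δ / 2 * k :=
    (tendsto_natCast_atTop_atTop.const_mul_atTop (by positivity)).eventually_ge_atTop _
  have hlog : ∀ᶠ k : ℕ in atTop, C ≤ δ / 2 * log k :=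
    ((tendsto_log_atTop.comp tendsto_natCast_atTop_atTop).const_mul_atTop
      (by positivity)).eventually_ge_atTop _
  filter_upwards [eventually_ge_atTop 2, hlin, hlog] with k hk2 hk hkl
  have hkR : (2 : ℝ) ≤ k := by exact_mod_cast hk2
  have hq1 : q - 1 ≠ 0 := by linarith
  have hk1 : (k : ℝ) - 1 ≠ 0 := by linarith
  have hidentity : s * ((k : ℝ) - 1) * log k - (γ * k * log k
      + η / ((q - 1) / (2 * s * ((k : ℝ) - 1))) * log k
      + η / (((q - 1) / (2 * s * ((k : ℝ) - 1))) ^ 2 * k))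
      = (δ * k - s') * log k - C * ((k : ℝ) - 1) ^ 2 / k := by
    simp only [δ, s', C]
    field_simp
    ring
  have hsq : C * ((k : ℝ) - 1) ^ 2 / k ≤ C * k := by
    rw [div_le_iff₀ (by positivity)]
    nlinarith
  have hlogk : 0 ≤ log (k : ℝ) := log_nonneg (by linarith)
  rw [← sub_nonneg, hidentity, sub_nonneg]
  calc C * ((k : ℝ) - 1) ^ 2 / k ≤ k * C := by linarith
    _ ≤ k * (δ / 2 * log k) := by gcongr
    _ ≤ (δ * k - s') * log k := by nlinarith

theorem moment_threshold_growth_general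
    (q s η γ : ℝ) (hq1 : 1 < q) (hs : 0 < s)
    (hη : η ∈ Set.Ioo (0 : ℝ) ((q - 1) / 2))
    (hγ2 : γ < s * (1 - 2 * η / (q - 1))) :
    ∃ k₀ : ℕ, ∀ k : ℕ, k₀ ≤ k →
      ∀ m : ℕ → ℝ,
        m k = (k : ℝ) ^ (s * ((k : ℝ) - 1)) →
        (∀ ℓ : ℕ, k ≤ ℓ →
          m (ℓ + 1) = m ℓ ^ (1 + (q - 1) / (2 * s * ((k : ℝ) - 1))) * (ℓ : ℝ) ^ (-η)) →
        ∀ ℓ : ℕ, k ≤ ℓ →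
          γ * ((q - 1) / (2 * s * ((k : ℝ) - 1)) + 1) ^ (ℓ - k) * (k : ℝ) * Real.log k
            ≤ Real.log (m ℓ) := by
  have hη0 : 0 ≤ η := hη.1.le
  obtain ⟨k₀, hk₀⟩ := eventually_atTop.mp
    ((eventually_gt_atTop 1).and (eventually_initial_bound hq1 hs hη0 hγ2))
  refine ⟨k₀, fun k hk m hmk hrec ℓ hℓ => ?_⟩
  obtain ⟨hk1, hinit⟩ := hk₀ k hk
  have hkR : (1 : ℝ) < k := by exact_mod_cast hk1
  set b := (q - 1) / (2 * s * ((k : ℝ) - 1))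
  have hb : 0 < b := div_pos (by linarith) (by nlinarith)
  have hmk0 : 0 < m k := hmk ▸ rpow_pos_of_pos (by linarith) _
  have hbound := le_of_log_recurrence (L := fun n => log (m n)) (A := γ * k * log k) hb hη0
    (by omega) (fun n hn => (log_rpow_recurrence (by omega) hmk0 hrec n hn).ge)
    (by rwa [hmk, log_rpow (by linarith)]) ℓ hℓ
  have hℓR : (1 : ℝ) ≤ ℓ := by exact_mod_cast (by omega : 1 ≤ ℓ)
  have hlogℓ : 0 ≤ η / b * log ℓ := mul_nonneg (by positivity) (log_nonneg hℓR)
  have hrest : 0 ≤ η / (b ^ 2 * k) := by positivity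
  linarith [show γ * (b + 1) ^ (ℓ - k) * k * log k = γ * k * log k * (b + 1) ^ (ℓ - k) by ring]

/-- Doubly exponential growth of the moment thresholds: for `q ∈ (1,2)`, `s > 0`,
`η ∈ (0,(q−1)/2)` and `0 < γ < s(1 − 2η/(q−1))`, there is `k₀` such that for all
`k ≥ k₀`, the sequence defined by `m_k = k^{s(k−1)}` and
`m_{ℓ+1} = m_ℓ^{1+β} ℓ^{−η}` (with `β = (q−1)/(2s(k−1))`) satisfies
`log m_ℓ ≥ γ (β+1)^{ℓ−k} k log k` for all `ℓ ≥ k`. -/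
theorem moment_threshold_growth
    (q s η γ : ℝ) (hq1 : 1 < q) (hq2 : q < 2) (hs : 0 < s)
    (hη : η ∈ Set.Ioo (0 : ℝ) ((q - 1) / 2))
    (hγ1 : 0 < γ) (hγ2 : γ < s * (1 - 2 * η / (q - 1))) :
    ∃ k₀ : ℕ, ∀ k : ℕ, k₀ ≤ k →
      ∀ m : ℕ → ℝ,
        m k = (k : ℝ) ^ (s * ((k : ℝ) - 1)) →
        (∀ ℓ : ℕ, k ≤ ℓ →
          m (ℓ + 1) = m ℓ ^ (1 + (q - 1) / (2 * s * ((k : ℝ) - 1))) * (ℓ : ℝ) ^ (-η)) →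
        ∀ ℓ : ℕ, k ≤ ℓ →
          γ * ((q - 1) / (2 * s * ((k : ℝ) - 1)) + 1) ^ (ℓ - k) * (k : ℝ) * Real.log k
            ≤ Real.log (m ℓ) :=
  moment_threshold_growth_general q s η γ hq1 hs hη hγ2
end
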